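/- arXiv:1412.3347 — 13 statements merged into one kernel-verified Lean document; each statement's English description precedes it below -/
import Mathlib

section
/- Colorful Carathéodory theorem: Let d ≥ 1 and let P_1, …, P_{d+1} ⊆ ℝ^d be finite sets such that 0 ∈ conv(P_i) for every i = 1, …, d+1. Then there exist points c_1 ∈ P_1, …, c_{d+1} ∈ P_{d+1} such that 0 ∈ conv({c_1, …, c_{d+1}}). -/
/-!
Bárány's argument: among all colorful selections `c`, take one whose hull is closest to the
origin, and let `x` be the point of least norm in that hull. If `x ≠ 0`, every `c i` lies in the
half-space `⟪x, ·⟫ ≥ ⟪x, x⟫`, and `x` is a positive combination of affinely independent points of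
the hyperplane `⟪x, ·⟫ = ⟪x, x⟫`. Those are linearly independent, so there are at most `d` of
them and some color `i₀` is not needed to produce `x`. Since `0 ∈ conv P i₀`, some `p ∈ P i₀`
has `⟪x, p⟫ ≤ 0`; swapping `c i₀` for `p` keeps `x` in the hull and adds `p`, and moving from `x`
towards `p` gets strictly closer to the origin, contradicting the choice of `c`.
-/

open Metric Module RealInnerProductSpace

theorem AffineIndependent.linearIndependent_of_apply_eq {k V ι : Type*} [Field k]
    [AddCommGroup V] [Module k V] [Fintype ι] {z : ι → V} (hz : AffineIndependent k z)
    (f : V →ₗ[k] k) {r : k} (hr : r ≠ 0) (hfz : ∀ i, f (z i) = r) :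
    LinearIndependent k z := by
  rw [Fintype.linearIndependent_iff]
  intro g hg
  have hsum : ∑ i, g i = 0 := by
    have := congrArg f hg
    simp only [map_sum, map_smul, hfz, smul_eq_mul, map_zero, ← Finset.sum_mul] at this
    exact (mul_eq_zero.mp this).resolve_right hr
  rw [affineIndependent_iff_of_fintype] at hz
  exact hz g hsum (by rwa [Finset.weightedVSub_eq_linear_combination _ hsum])

theorem exists_mem_convexHull_image_compl_singleton {V ι : Type*} [AddCommGroup V]
    [Module ℝ V] [FiniteDimensional ℝ V] [Fintype ι] (hcard : finrank ℝ V < Fintype.card ι)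
    {c : ι → V} {x : V} (hx : x ∈ convexHull ℝ (Set.range c)) (f : V →ₗ[ℝ] ℝ)
    (hfx : f x ≠ 0) (hfc : ∀ i, f x ≤ f (c i)) :
    ∃ i₀, x ∈ convexHull ℝ (c '' {i₀}ᶜ) := by
  obtain ⟨κ, _, z, w, hzc, hz, hw₀, hw₁, hwz⟩ := eq_pos_convex_span_of_mem_convexHull hx
  -- the weights average `f ∘ z` to its lower bound `f x`, so `f` is constant on the `z j`
  have hle : ∀ j, f x ≤ f (z j) := fun j ↦ by
    obtain ⟨i, hi⟩ := hzc (Set.mem_range_self j)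
    exact hi ▸ hfc i
  have hfz : ∀ j, f (z j) = f x := by
    have hgap : ∑ j, w j * (f (z j) - f x) = 0 := by
      simp only [← hwz, mul_sub, Finset.sum_sub_distrib, ← Finset.sum_mul, hw₁, one_mul, map_sum,
        map_smul, smul_eq_mul, sub_self]
    intro j
    have := (Finset.sum_eq_zero_iff_of_nonneg fun j _ ↦
      mul_nonneg (hw₀ j).le (sub_nonneg.mpr (hle j))).mp hgap j (Finset.mem_univ j)
    linarith [(mul_eq_zero.mp this).resolve_left (hw₀ j).ne']
  have hκ := (hz.linearIndependent_of_apply_eq f hfx hfz).fintype_card_le_finrank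
  choose g hg using fun j ↦ hzc (Set.mem_range_self j)
  obtain ⟨i₀, hi₀⟩ : ∃ i₀, i₀ ∉ Set.range g := by
    by_contra! h
    exact absurd (Fintype.card_le_of_surjective g h) (by omega)
  have hxz : x ∈ convexHull ℝ (Set.range z) := hwz ▸ (convex_convexHull ℝ _).sum_mem
    (fun j _ ↦ (hw₀ j).le) hw₁ fun j _ ↦ subset_convexHull ℝ _ (Set.mem_range_self j)
  refine ⟨i₀, convexHull_mono ?_ hxz⟩
  rintro _ ⟨j, rfl⟩
  exact ⟨g j, fun h ↦ hi₀ ⟨j, h⟩, hg j⟩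

theorem inner_self_le_inner_of_forall_norm_le {F : Type*} [NormedAddCommGroup F]
    [InnerProductSpace ℝ F] {K : Set F} (hK : Convex ℝ K) {x : F} (hx : x ∈ K)
    (hmin : ∀ y ∈ K, ‖x‖ ≤ ‖y‖) {y : F} (hy : y ∈ K) : ⟪x, x⟫ ≤ ⟪x, y⟫ := by
  have : Nonempty K := ⟨⟨x, hx⟩⟩
  have hinf : ‖0 - x‖ = ⨅ w : K, ‖0 - (w : F)‖ := le_antisymm
    (le_ciInf fun w ↦ by simpa using hmin w w.2)
    (ciInf_le (f := fun w : K ↦ ‖0 - (w : F)‖)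
      ⟨0, Set.forall_mem_range.mpr fun _ ↦ norm_nonneg _⟩ ⟨x, hx⟩)
  have := (norm_eq_iInf_iff_real_inner_le_zero hK hx).mp hinf y hy
  simp only [zero_sub, inner_neg_left, inner_sub_right] at this
  linarith

theorem colorful_caratheodory_of_finrank_lt_card {E ι : Type*} [NormedAddCommGroup E]
    [InnerProductSpace ℝ E] [FiniteDimensional ℝ E] [Fintype ι]
    (hcard : finrank ℝ E < Fintype.card ι) (P : ι → Finset E)
    (hP : ∀ i, (0 : E) ∈ convexHull ℝ (P i : Set E)) :
    ∃ c : ι → E, (∀ i, c i ∈ P i) ∧ (0 : E) ∈ convexHull ℝ (Set.range c) := by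
  classical
  have : Nonempty ι := Fintype.card_pos_iff.mp (by omega)
  have hne : (Fintype.piFinset P).Nonempty := Fintype.piFinset_nonempty.mpr fun i ↦
    Finset.coe_nonempty.mp (convexHull_nonempty_iff.mp ⟨0, hP i⟩)
  obtain ⟨c, hc, hcmin⟩ := (Fintype.piFinset P).exists_min_image
    (fun c ↦ infDist 0 (convexHull ℝ (Set.range c))) hne
  obtain ⟨x, hxK, hx⟩ := ((Set.finite_range c).isCompact_convexHull (𝕜 := ℝ))
    |>.exists_infDist_eq_dist (Set.range_nonempty c).convexHull 0
  have hmin : ∀ c' ∈ Fintype.piFinset P, ∀ y ∈ convexHull ℝ (Set.range c'), ‖x‖ ≤ ‖y‖ :=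
    fun c' hc' y hy ↦ calc
      ‖x‖ = infDist 0 (convexHull ℝ (Set.range c)) := by rw [hx, dist_zero_left]
      _ ≤ infDist 0 (convexHull ℝ (Set.range c')) := hcmin c' hc'
      _ ≤ ‖y‖ := dist_zero_left y ▸ infDist_le_dist_of_mem hy
  refine ⟨c, Fintype.mem_piFinset.mp hc, ?_⟩
  suffices x = 0 from this ▸ hxK
  by_contra hx0
  obtain ⟨i₀, hi₀⟩ := exists_mem_convexHull_image_compl_singleton hcard hxK (innerₗ E x)
    (by simpa using hx0) fun i ↦ inner_self_le_inner_of_forall_norm_le (convex_convexHull ℝ _)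
      hxK (hmin c hc) (subset_convexHull ℝ _ (Set.mem_range_self i))
  obtain ⟨p, hp, hxp⟩ := ((innerₗ E x).concaveOn convex_univ).exists_le_of_mem_convexHull
    (Set.subset_univ _) (hP i₀)
  simp only [innerₗ_apply_apply, inner_zero_right] at hxp
  set c' := Function.update c i₀ p
  have hc' : c' ∈ Fintype.piFinset P := Fintype.mem_piFinset.mpr fun i ↦ by
    rcases eq_or_ne i i₀ with rfl | hi
    · simpa [c'] using hp
    · simpa [c', hi] using Fintype.mem_piFinset.mp hc i
  have hxK' : x ∈ convexHull ℝ (Set.range c') := by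
    refine convexHull_mono ?_ hi₀
    rintro _ ⟨i, hi, rfl⟩
    exact ⟨i, Function.update_of_ne hi _ _⟩
  have hpK' : p ∈ convexHull ℝ (Set.range c') :=
    subset_convexHull ℝ _ ⟨i₀, Function.update_self _ _ _⟩
  have := inner_self_le_inner_of_forall_norm_le (convex_convexHull ℝ _) hxK' (hmin c' hc') hpK'
  exact hx0 (real_inner_self_nonpos.mp (this.trans hxp))

theorem colorful_caratheodory_general (d : ℕ)
    (P : Fin (d + 1) → Finset (EuclideanSpace ℝ (Fin d)))
    (hP : ∀ i, (0 : EuclideanSpace ℝ (Fin d)) ∈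
      convexHull ℝ ((P i : Set (EuclideanSpace ℝ (Fin d))))) :
    ∃ c : Fin (d + 1) → EuclideanSpace ℝ (Fin d),
      (∀ i, c i ∈ P i) ∧
      (0 : EuclideanSpace ℝ (Fin d)) ∈ convexHull ℝ (Set.range c) :=
  colorful_caratheodory_of_finrank_lt_card (by simp) P hP

/-- **Colorful Carathéodory theorem.** Given `d + 1` finite color classes
`P 0, …, P d` in `ℝ^d`, each containing the origin in its convex hull, there is
a choice of one point from each color class whose convex hull contains the
origin. -/
theorem colorful_caratheodory (d : ℕ) (hd : 1 ≤ d)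
    (P : Fin (d + 1) → Finset (EuclideanSpace ℝ (Fin d)))
    (hP : ∀ i, (0 : EuclideanSpace ℝ (Fin d)) ∈
      convexHull ℝ ((P i : Set (EuclideanSpace ℝ (Fin d))))) :
    ∃ c : Fin (d + 1) → EuclideanSpace ℝ (Fin d),
      (∀ i, c i ∈ P i) ∧
      (0 : EuclideanSpace ℝ (Fin d)) ∈ convexHull ℝ (Set.range c) :=
  colorful_caratheodory_general d P hP
end

section
/- Let d ≥ 1 and let P ⊆ ℝ^d be a finite set in general position with 2 ≤ |P| ≤ d+1 and 0 ∈ conv(P). Then for every partition of P into two nonempty disjoint sets P_1 and P_2 with P = P_1 ∪ P_2, there exists a vector v ∈ ℝ^d with v ≠ 0 such that v ∈ pos(P_1) and −v ∈ pos(P_2). -/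
open scoped Classical

/-- A finite set `P ⊆ ℝ^d` is in *general position* if for every `k ≤ d` no
`k + 2` of its points lie in a `k`-dimensional affine subspace, and no proper
subset of `P` contains the origin in its convex hull. -/
def GenPos {d : ℕ} (P : Finset (EuclideanSpace ℝ (Fin d))) : Prop :=
  (∀ k : ℕ, k ≤ d → ∀ S ⊆ P, S.card = k + 2 →
    ¬ ∃ A : AffineSubspace ℝ (EuclideanSpace ℝ (Fin d)),
        Module.finrank ℝ A.direction = k ∧
        (S : Set (EuclideanSpace ℝ (Fin d))) ⊆ (A : Set (EuclideanSpace ℝ (Fin d)))) ∧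
  (∀ S ⊂ P, (0 : EuclideanSpace ℝ (Fin d)) ∉
    convexHull ℝ (S : Set (EuclideanSpace ℝ (Fin d))))

/-- `posCone P` is the set of all nonnegative linear combinations of the
points of the finite set `P`. -/
def posCone {d : ℕ} (P : Finset (EuclideanSpace ℝ (Fin d))) :
    Set (EuclideanSpace ℝ (Fin d)) :=
  {x | ∃ μ : EuclideanSpace ℝ (Fin d) → ℝ,
    (∀ p ∈ P, 0 ≤ μ p) ∧ x = ∑ p ∈ P, μ p • p}

/-- For a set `P` in general position with `2 ≤ |P| ≤ d + 1` and
`0 ∈ conv P`, every partition of `P` into two nonempty sets `P₁, P₂` admits a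
nonzero vector `v` with `v ∈ pos P₁` and `-v ∈ pos P₂`. -/
theorem line_in_cones (d : ℕ) (hd : 1 ≤ d)
    (P : Finset (EuclideanSpace ℝ (Fin d))) (hgp : GenPos P)
    (hcard₁ : 2 ≤ P.card) (hcard₂ : P.card ≤ d + 1)
    (h0 : (0 : EuclideanSpace ℝ (Fin d)) ∈
      convexHull ℝ ((P : Set (EuclideanSpace ℝ (Fin d))))) :
    ∀ P₁ P₂ : Finset (EuclideanSpace ℝ (Fin d)),
      P₁.Nonempty → P₂.Nonempty → Disjoint P₁ P₂ → P = P₁ ∪ P₂ →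
      ∃ v : EuclideanSpace ℝ (Fin d), v ≠ 0 ∧ v ∈ posCone P₁ ∧ -v ∈ posCone P₂ := by
  intro P₁ P₂ h₁ h₂ hdisj hun
  rw [Finset.convexHull_eq] at h0
  obtain ⟨w, hw0, hw1, hwc⟩ := h0
  have hwsum : ∑ p ∈ P, w p • p = 0 := by
    have := hwc
    rw [Finset.centerMass, hw1, inv_one, one_smul] at this
    simpa using this
  have hsplit : ∑ p ∈ P₁, w p • p + ∑ p ∈ P₂, w p • p = 0 := by
    rw [← Finset.sum_union hdisj, ← hun, hwsum]
  have hsplit' : ∑ p ∈ P₁, w p + ∑ p ∈ P₂, w p = 1 := by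
    rw [← Finset.sum_union hdisj, ← hun, hw1]
  set v := ∑ p ∈ P₁, w p • p with hv
  have hsub₁ : P₁ ⊂ P := by
    obtain ⟨q, hq⟩ := h₂
    refine ⟨hun ▸ Finset.subset_union_left, fun hPP₁ => ?_⟩
    exact (Finset.disjoint_left.mp hdisj (hPP₁ (hun ▸ Finset.mem_union_right _ hq)) hq)
  have hsub₂ : P₂ ⊂ P := by
    obtain ⟨q, hq⟩ := h₁
    refine ⟨hun ▸ Finset.subset_union_right, fun hPP₂ => ?_⟩
    exact (Finset.disjoint_left.mp hdisj hq (hPP₂ (hun ▸ Finset.mem_union_left _ hq)))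
  have hw0₁ : ∀ p ∈ P₁, 0 ≤ w p := fun p hp => hw0 p (hun ▸ Finset.mem_union_left _ hp)
  have hw0₂ : ∀ p ∈ P₂, 0 ≤ w p := fun p hp => hw0 p (hun ▸ Finset.mem_union_right _ hp)
  have hvne : v ≠ 0 := by
    intro hv0
    rcases eq_or_lt_of_le (Finset.sum_nonneg hw0₁) with hs | hs
    · -- all weights on P₁ vanish; then 0 ∈ conv P₂
      have hsum₂ : ∑ p ∈ P₂, w p = 1 := by
        rw [← hsplit'] ; rw [← hs] ; ring
      have hmem : (0 : EuclideanSpace ℝ (Fin d)) ∈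
          convexHull ℝ (P₂ : Set (EuclideanSpace ℝ (Fin d))) := by
        have := Finset.centerMass_mem_convexHull P₂ hw0₂ (by rw [hsum₂]; norm_num)
          (fun p hp => Finset.mem_coe.mpr hp)
        have hcm : P₂.centerMass w (fun p => p) = 0 := by
          rw [Finset.centerMass, hsum₂, inv_one, one_smul]
          have h := hsplit
          rw [hv0, zero_add] at h
          exact h
        rwa [hcm] at this
      exact hgp.2 P₂ hsub₂ hmem
    · have hmem : (0 : EuclideanSpace ℝ (Fin d)) ∈
          convexHull ℝ (P₁ : Set (EuclideanSpace ℝ (Fin d))) := by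
        have := Finset.centerMass_mem_convexHull P₁ hw0₁ hs
          (fun p hp => Finset.mem_coe.mpr hp)
        have hcm : P₁.centerMass w (fun p => p) = 0 := by
          rw [Finset.centerMass]
          rw [show ∑ p ∈ P₁, w p • p = (0 : EuclideanSpace ℝ (Fin d)) from hv ▸ hv0,
            smul_zero]
        rwa [hcm] at this
      exact hgp.2 P₁ hsub₁ hmem
  refine ⟨v, hvne, ⟨w, hw0₁, rfl⟩, ⟨w, hw0₂, ?_⟩⟩
  have : -v = ∑ p ∈ P₂, w p • p := by
    rw [hv, neg_eq_iff_add_eq_zero, hsplit]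
  exact this
end

section
/- Let P ⊆ ℝ^d be a finite nonempty set in general position. Then 0 ∈ conv(P) if and only if lsp(P) ⊆ pos(P). -/
open Finset

section

variable {𝕜 E : Type*} [Field 𝕜] [LinearOrder 𝕜] [IsStrictOrderedRing 𝕜] [AddCommGroup E]
  [Module 𝕜 E] {P : Finset E}

theorem exists_pos_sum_smul_eq_zero_of_zero_mem_convexHull
    (h0 : (0 : E) ∈ convexHull 𝕜 (P : Set E))
    (hmin : ∀ S ⊂ P, (0 : E) ∉ convexHull 𝕜 (S : Set E)) :
    ∃ w : E → 𝕜, (∀ p ∈ P, 0 < w p) ∧ ∑ p ∈ P, w p • p = 0 := by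
  classical
  obtain ⟨w, hw, hw1, hw0⟩ := mem_convexHull'.mp h0
  refine ⟨w, fun q hq => (hw q hq).lt_of_ne' fun hq0 => hmin _ (P.erase_ssubset hq) ?_, hw0⟩
  refine mem_convexHull'.mpr ⟨w, fun p hp => hw p (mem_of_mem_erase hp), ?_, ?_⟩
  · rwa [sum_erase _ hq0]
  · rwa [sum_erase _ (by rw [hq0, zero_smul])]

theorem exists_nonneg_sum_smul_eq_of_mem_span {w : E → 𝕜} (hw : ∀ p ∈ P, 0 < w p)
    (hw0 : ∑ p ∈ P, w p • p = 0) {x : E} (hx : x ∈ Submodule.span 𝕜 (P : Set E)) :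
    ∃ μ : E → 𝕜, (∀ p ∈ P, 0 ≤ μ p) ∧ x = ∑ p ∈ P, μ p • p := by
  obtain ⟨f, -, rfl⟩ := Submodule.mem_span_finset.mp hx
  set t := ∑ p ∈ P, |f p| / w p
  refine ⟨fun p => f p + t * w p, fun p hp => ?_, ?_⟩
  · have hle : |f p| / w p ≤ t :=
      single_le_sum (f := fun q => |f q| / w q)
        (fun q hq => div_nonneg (abs_nonneg _) (hw q hq).le) hp
    have : |f p| ≤ t * w p := (div_le_iff₀ (hw p hp)).mp hle
    linarith [neg_abs_le (f p)]
  · simp only [add_smul, mul_smul, sum_add_distrib, ← smul_sum, hw0, smul_zero, add_zero]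

theorem zero_mem_convexHull_of_sum_smul_eq_zero {w : E → 𝕜} (hw : ∀ p ∈ P, 0 ≤ w p)
    (hws : 0 < ∑ p ∈ P, w p) (hw0 : ∑ p ∈ P, w p • p = 0) :
    (0 : E) ∈ convexHull 𝕜 (P : Set E) := by
  simpa [centerMass, hw0] using P.centerMass_mem_convexHull hw hws (z := id) fun p hp => hp

theorem zero_mem_convexHull_of_neg_eq_sum_smul {p₀ : E} (hp₀ : p₀ ∈ P) {μ : E → 𝕜}
    (hμ : ∀ p ∈ P, 0 ≤ μ p) (h : -p₀ = ∑ p ∈ P, μ p • p) :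
    (0 : E) ∈ convexHull 𝕜 (P : Set E) := by
  classical
  refine zero_mem_convexHull_of_sum_smul_eq_zero (w := fun p => μ p + if p = p₀ then 1 else 0)
    (fun p hp => add_nonneg (hμ p hp) (by split_ifs <;> norm_num)) ?_ ?_
  · rw [sum_add_distrib, sum_ite_eq' P p₀, if_pos hp₀]
    linarith [sum_nonneg hμ]
  · simp [add_smul, sum_add_distrib, ite_smul, ← h, hp₀]

end

/-- For a finite nonempty set `P ⊆ ℝ^d` in general position, the origin lies
in the convex hull of `P` if and only if the linear span of `P` is contained
in the cone of nonnegative combinations of `P`. -/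
theorem origin_in_hull_iff_span_subset_cone (d : ℕ)
    (P : Finset (EuclideanSpace ℝ (Fin d))) (hne : P.Nonempty) (hgp : GenPos P) :
    (0 : EuclideanSpace ℝ (Fin d)) ∈
        convexHull ℝ ((P : Set (EuclideanSpace ℝ (Fin d)))) ↔
      (Submodule.span ℝ ((P : Set (EuclideanSpace ℝ (Fin d)))) :
        Set (EuclideanSpace ℝ (Fin d))) ⊆ posCone P := by
  constructor
  · intro h0 x hx
    obtain ⟨w, hw, hw0⟩ := exists_pos_sum_smul_eq_zero_of_zero_mem_convexHull h0 hgp.2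
    exact exists_nonneg_sum_smul_eq_of_mem_span hw hw0 hx
  · intro hspan
    obtain ⟨p₀, hp₀⟩ := hne
    obtain ⟨μ, hμ, h⟩ := hspan (neg_mem (Submodule.subset_span hp₀))
    exact zero_mem_convexHull_of_neg_eq_sum_smul hp₀ hμ h
end

section
/- Let C ⊆ ℝ^d be a finite set in general position with |C| ≤ d+1 and 0 ∈ conv(C), and let π : ℝ^d → ℝ^d denote the orthogonal projection onto the orthogonal complement lsp(C)^⊥ of lsp(C). Let Q ⊆ ℝ^d be a finite set such that 0 ∈ conv(π(Q)). Then there exists a point c ∈ C such that 0 ∈ conv(Q ∪ (C \ {c})). -/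
open Finset Submodule

lemma exists_mem_convexHull_mem_of_zero_mem_convexHull_orthogonalProjection
    {E : Type*} [NormedAddCommGroup E] [InnerProductSpace ℝ E]
    (K : Submodule ℝ E) [K.HasOrthogonalProjection] {s : Set E}
    (h : (0 : E) ∈ convexHull ℝ ((fun x => (Kᗮ.orthogonalProjectionOnto x : E)) '' s)) :
    ∃ v ∈ convexHull ℝ s, v ∈ K := by
  change (0 : E) ∈ convexHull ℝ ((Kᗮ.starProjection : E →ₗ[ℝ] E) '' s) at h
  rw [← LinearMap.image_convexHull] at h
  obtain ⟨v, hv, hv0⟩ := h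
  refine ⟨v, hv, ?_⟩
  rw [← K.orthogonal_orthogonal, ← starProjection_apply_eq_zero_iff]
  exact hv0

section Convex

variable {𝕜 E : Type*} [Field 𝕜] [LinearOrder 𝕜] [IsStrictOrderedRing 𝕜]
  [AddCommGroup E] [Module 𝕜 E]

lemma mem_convexHull_erase_of_weight_eq_zero [DecidableEq E] {s : Finset E} {w : E → 𝕜}
    {x c : E} (hw₀ : ∀ y ∈ s, 0 ≤ w y) (hw₁ : ∑ y ∈ s, w y = 1) (hx : ∑ y ∈ s, w y • y = x)
    (hc : w c = 0) : x ∈ convexHull 𝕜 (↑(s.erase c) : Set E) :=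
  Finset.mem_convexHull'.2 ⟨w, fun y hy => hw₀ y (mem_of_mem_erase hy),
    by rwa [sum_erase _ hc], by rwa [sum_erase _ (by rw [hc, zero_smul])]⟩

lemma exists_nonneg_sum_erase_smul_eq_neg [DecidableEq E] {s : Finset E} (hs : s.Nonempty)
    {μ : E → 𝕜} (hμ : ∀ x ∈ s, 0 < μ x) (hμs : ∑ x ∈ s, μ x • x = 0) {v : E}
    (hv : v ∈ span 𝕜 (s : Set E)) :
    ∃ c ∈ s, ∃ β : E → 𝕜, (∀ x ∈ s.erase c, 0 ≤ β x) ∧ ∑ x ∈ s.erase c, β x • x = -v := by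
  obtain ⟨α, -, hα⟩ := mem_span_finset.1 hv
  obtain ⟨c, hc, hmax⟩ := s.exists_max_image (fun x => α x / μ x) hs
  set β : E → 𝕜 := fun x => α c / μ c * μ x - α x
  have hβ₀ : ∀ x ∈ s, 0 ≤ β x := fun x hx => by
    have := (div_le_iff₀ (hμ x hx)).1 (hmax x hx)
    simp only [β]
    linarith
  have hβc : β c = 0 := by simp [β, div_mul_cancel₀ _ (hμ c hc).ne']
  have hβs : ∑ x ∈ s, β x • x = -v := by
    simp only [β, sub_smul, mul_smul, sum_sub_distrib, ← smul_sum, hμs, hα, smul_zero, zero_sub]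
  refine ⟨c, hc, β, fun x hx => hβ₀ x (mem_of_mem_erase hx), ?_⟩
  rwa [sum_erase _ (by rw [hβc, zero_smul])]

lemma zero_mem_convexHull_union_of_smul_eq_neg {A B : Set E} {v w : E} {t : 𝕜}
    (hv : v ∈ convexHull 𝕜 A) (hw : w ∈ convexHull 𝕜 B) (ht : 0 ≤ t) (h : t • w = -v) :
    (0 : E) ∈ convexHull 𝕜 (A ∪ B) := by
  have ht₁ : 0 < 1 + t := by linarith
  have hzero : (1 + t)⁻¹ • v + (t / (1 + t)) • w = 0 := by
    rw [div_eq_inv_mul, mul_smul, h, smul_neg, add_neg_cancel]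
  rw [← hzero]
  exact convex_convexHull 𝕜 _ (convexHull_mono Set.subset_union_left hv)
    (convexHull_mono Set.subset_union_right hw) (by positivity) (by positivity)
    (by field_simp)

lemma zero_mem_convexHull_union_of_sum_smul_eq_neg {A : Set E} {u : Finset E} {v : E}
    {β : E → 𝕜} (hv : v ∈ convexHull 𝕜 A) (hβ : ∀ x ∈ u, 0 ≤ β x)
    (h : ∑ x ∈ u, β x • x = -v) : (0 : E) ∈ convexHull 𝕜 (A ∪ u) := by
  rcases (sum_nonneg hβ).eq_or_lt with hsum | hsum
  · have hv0 : v = 0 := by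
      rw [← neg_eq_zero, ← h]
      exact sum_eq_zero fun x hx => by
        rw [(sum_eq_zero_iff_of_nonneg hβ).1 hsum.symm x hx, zero_smul]
    exact convexHull_mono Set.subset_union_left (hv0 ▸ hv)
  · refine zero_mem_convexHull_union_of_smul_eq_neg hv
      (u.centerMass_id_mem_convexHull hβ hsum) hsum.le ?_
    rw [centerMass, smul_smul, mul_inv_cancel₀ hsum.ne', one_smul]
    simpa using h

end Convex

theorem dimension_reduction_general (d : ℕ)
    (C : Finset (EuclideanSpace ℝ (Fin d)))
    (h0 : (0 : EuclideanSpace ℝ (Fin d)) ∈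
      convexHull ℝ ((C : Set (EuclideanSpace ℝ (Fin d)))))
    (Q : Finset (EuclideanSpace ℝ (Fin d)))
    (hQ : (0 : EuclideanSpace ℝ (Fin d)) ∈
      convexHull ℝ ((fun x : EuclideanSpace ℝ (Fin d) =>
          ((Submodule.orthogonalProjectionOnto
            ((Submodule.span ℝ ((C : Set (EuclideanSpace ℝ (Fin d)))))ᗮ) x :
            EuclideanSpace ℝ (Fin d)))) '' (Q : Set (EuclideanSpace ℝ (Fin d))))) :
    ∃ c ∈ C, (0 : EuclideanSpace ℝ (Fin d)) ∈
      convexHull ℝ ((Q : Set (EuclideanSpace ℝ (Fin d))) ∪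
        ((C : Set (EuclideanSpace ℝ (Fin d))) \ {c})) := by
  classical
  obtain ⟨v, hvQ, hvC⟩ :=
    exists_mem_convexHull_mem_of_zero_mem_convexHull_orthogonalProjection _ hQ
  obtain ⟨μ, hμ₀, hμ₁, hμC⟩ := Finset.mem_convexHull'.1 h0
  by_cases hzero : ∃ c ∈ C, μ c = 0
  · obtain ⟨c, hc, hμc⟩ := hzero
    refine ⟨c, hc, convexHull_mono Set.subset_union_right ?_⟩
    rw [← coe_erase]
    exact mem_convexHull_erase_of_weight_eq_zero hμ₀ hμ₁ hμC hμc
  · have hpos : ∀ x ∈ C, 0 < μ x := fun x hx =>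
      (hμ₀ x hx).lt_of_ne' fun hx0 => hzero ⟨x, hx, hx0⟩
    have hC : C.Nonempty := nonempty_of_sum_ne_zero (hμ₁ ▸ one_ne_zero)
    obtain ⟨c, hc, β, hβ₀, hβ⟩ := exists_nonneg_sum_erase_smul_eq_neg hC hpos hμC hvC
    refine ⟨c, hc, ?_⟩
    rw [← coe_erase]
    exact zero_mem_convexHull_union_of_sum_smul_eq_neg hvQ hβ₀ hβ

/-- Let `C ⊆ ℝ^d` be in general position with `|C| ≤ d + 1` and `0 ∈ conv C`,
and let `Q ⊆ ℝ^d` be a finite set whose orthogonal projection onto the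
orthogonal complement of the linear span of `C` contains the origin in its
convex hull. Then some point `c ∈ C` can be replaced by `Q`:
`0 ∈ conv (Q ∪ (C \ {c}))`. -/
theorem dimension_reduction (d : ℕ)
    (C : Finset (EuclideanSpace ℝ (Fin d))) (hgp : GenPos C)
    (hcard : C.card ≤ d + 1)
    (h0 : (0 : EuclideanSpace ℝ (Fin d)) ∈
      convexHull ℝ ((C : Set (EuclideanSpace ℝ (Fin d)))))
    (Q : Finset (EuclideanSpace ℝ (Fin d)))
    (hQ : (0 : EuclideanSpace ℝ (Fin d)) ∈
      convexHull ℝ ((fun x : EuclideanSpace ℝ (Fin d) =>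
          ((Submodule.orthogonalProjectionOnto
            ((Submodule.span ℝ ((C : Set (EuclideanSpace ℝ (Fin d)))))ᗮ) x :
            EuclideanSpace ℝ (Fin d)))) '' (Q : Set (EuclideanSpace ℝ (Fin d))))) :
    ∃ c ∈ C, (0 : EuclideanSpace ℝ (Fin d)) ∈
      convexHull ℝ ((Q : Set (EuclideanSpace ℝ (Fin d))) ∪
        ((C : Set (EuclideanSpace ℝ (Fin d))) \ {c})) :=
  dimension_reduction_general d C h0 Q hQ
end

section
/- Let m ≥ 2, let C ⊆ ℝ^d be a finite set in general position with |C| ≤ d+1 and 0 ∈ conv(C), and let C_1, …, C_m be a partition of C into m nonempty pairwise disjoint sets. Then there exist points c'_1, …, c'_m ∈ ℝ^d such that (1) c'_i ∈ pos(C_i) and c'_i ≠ 0 for every i = 1, …, m, (2) 0 ∈ conv({c'_1, …, c'_m}), and (3) the linear span of {c'_1, …, c'_m} has dimension exactly m − 1. -/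
open scoped Classical

/-!
Write `0 = ∑_{p ∈ C} w_p p` as a convex combination; minimality of `C` forces every `w_p > 0`.
The block sums `c'_i = ∑_{p ∈ C_i} w_p p` lie in `pos(C_i)`, are nonzero (again by minimality,
as `C_i ⊊ C`) and add up to `0`. Since `|C| ≤ d + 1`, general position makes `C` affinely
independent, so the barycentric coordinates of `0` with respect to `C` are unique. A relation
`∑ a_i c'_i = 0` writes `0` with the coefficients `a_i w_p` (`p ∈ C_i`), which must therefore be
proportional to `w`: all `a_i` are equal. So `a ↦ ∑ a_i c'_i` has kernel spanned by `(1, …, 1)`.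
-/

open Finset Function Module Submodule

section Convex

variable {R E ι : Type*} [Field R] [LinearOrder R] [IsStrictOrderedRing R]
  [AddCommGroup E] [Module R E]

theorem zero_mem_convexHull_of_sum_smul_eq_zero_s6 {t : Finset ι} {w : ι → R} {z : ι → E}
    {s : Set E} (hw₀ : ∀ i ∈ t, 0 ≤ w i) (hws : 0 < ∑ i ∈ t, w i) (hz : ∀ i ∈ t, z i ∈ s)
    (h : ∑ i ∈ t, w i • z i = 0) : (0 : E) ∈ convexHull R s := by
  simpa [Finset.centerMass, h] using t.centerMass_mem_convexHull hw₀ hws hz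

theorem pos_of_sum_smul_eq_zero_of_forall_ssubset {C : Finset E}
    (hC : ∀ S ⊂ C, (0 : E) ∉ convexHull R (S : Set E)) {w : E → R}
    (hw₀ : ∀ p ∈ C, 0 ≤ w p) (hw₁ : ∑ p ∈ C, w p = 1) (hwC : ∑ p ∈ C, w p • p = 0)
    {p : E} (hp : p ∈ C) : 0 < w p := by
  refine (hw₀ p hp).lt_of_ne fun hwp => hC _ (erase_ssubset hp) ?_
  refine zero_mem_convexHull_of_sum_smul_eq_zero_s6 (z := id)
    (fun q hq => hw₀ q (mem_of_mem_erase hq)) ?_ (fun q hq => mem_coe.2 hq) ?_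
  · rw [sum_erase _ hwp.symm, hw₁]
    exact one_pos
  · rw [sum_erase _ (by simp [← hwp])]
    exact hwC

end Convex

theorem AffineIndependent.eq_sum_mul_of_sum_smul_eq_zero {k E : Type*} [Ring k]
    [AddCommGroup E] [Module k E] {C : Finset E} (hC : AffineIndependent k ((↑) : C → E))
    {w ν : E → k} (hw₁ : ∑ p ∈ C, w p = 1) (hwC : ∑ p ∈ C, w p • p = 0)
    (hν : ∑ p ∈ C, ν p • p = 0) {p : E} (hp : p ∈ C) : ν p = (∑ q ∈ C, ν q) * w p := by
  refine hC.eq_of_sum_eq_sum (s := univ) (w₁ := fun q : C => ν q)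
    (w₂ := fun q : C => (∑ q ∈ C, ν q) * w q) ?_ ?_ ⟨p, hp⟩ (mem_univ _)
  · rw [sum_coe_sort C ν, sum_coe_sort C (fun q => (∑ q ∈ C, ν q) * w q), ← mul_sum, hw₁,
      mul_one]
  · simp_rw [mul_smul]
    rw [sum_coe_sort C (fun q => ν q • q), ← smul_sum, sum_coe_sort C (fun q => w q • q), hν,
      hwC, smul_zero]

theorem Finset.ssubset_biUnion_of_pairwise_disjoint {ι α : Type*} [Fintype ι] [Nontrivial ι]
    [DecidableEq α] {Cp : ι → Finset α} (hne : ∀ i, (Cp i).Nonempty)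
    (hdisj : Pairwise (Disjoint on Cp)) (i : ι) : Cp i ⊂ univ.biUnion Cp := by
  obtain ⟨j, hji⟩ := exists_ne i
  obtain ⟨q, hq⟩ := hne j
  refine (ssubset_iff_of_subset (subset_biUnion_of_mem Cp (mem_univ i))).2 ⟨q, ?_, ?_⟩
  · exact mem_biUnion.2 ⟨j, mem_univ j, hq⟩
  · exact disjoint_left.1 (hdisj hji) hq

section BlockSums

variable {k E ι : Type*} [Field k] [AddCommGroup E] [Module k E] [Fintype ι] [DecidableEq E]
  {C : Finset E} {Cp : ι → Finset E} {w : E → k}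

theorem eq_of_sum_smul_blockSum_eq_zero (hC : AffineIndependent k ((↑) : C → E))
    (hw : ∀ p ∈ C, w p ≠ 0) (hw₁ : ∑ p ∈ C, w p = 1) (hwC : ∑ p ∈ C, w p • p = 0)
    (hne : ∀ i, (Cp i).Nonempty) (hdisj : Pairwise (Disjoint on Cp))
    (hunion : C = univ.biUnion Cp) {a : ι → k} (ha : ∑ i, a i • ∑ p ∈ Cp i, w p • p = 0)
    (i j : ι) : a i = a j := by
  have hsub : ∀ i, Cp i ⊆ C := fun i => hunion ▸ subset_biUnion_of_mem Cp (mem_univ i)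
  set α : E → k := fun p => ∑ i, if p ∈ Cp i then a i else 0
  have hα : ∀ i, ∀ p ∈ Cp i, α p = a i := fun i p hp => by
    simp only [α]
    rw [sum_eq_single i (fun j _ hji => if_neg (disjoint_left.1 (hdisj hji.symm) hp))
      (fun hi => absurd (mem_univ i) hi), if_pos hp]
  have hν : ∑ p ∈ C, (α p * w p) • p = 0 := by
    rw [hunion, sum_biUnion (hdisj.set_pairwise _), ← ha]
    refine sum_congr rfl fun i _ => ?_
    rw [smul_sum]
    exact sum_congr rfl fun p hp => by rw [hα i p hp, mul_smul]
  have key : ∀ i, a i = ∑ q ∈ C, α q * w q := fun i => by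
    obtain ⟨p, hp⟩ := hne i
    have hcoord := hC.eq_sum_mul_of_sum_smul_eq_zero hw₁ hwC hν (hsub i hp)
    rw [hα i p hp] at hcoord
    exact mul_right_cancel₀ (hw p (hsub i hp)) hcoord
  rw [key i, key j]

theorem finrank_span_range_blockSum (hC : AffineIndependent k ((↑) : C → E))
    (hw : ∀ p ∈ C, w p ≠ 0) (hw₁ : ∑ p ∈ C, w p = 1) (hwC : ∑ p ∈ C, w p • p = 0)
    (hne : ∀ i, (Cp i).Nonempty) (hdisj : Pairwise (Disjoint on Cp))
    (hunion : C = univ.biUnion Cp) :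
    finrank k (span k (Set.range fun i => ∑ p ∈ Cp i, w p • p)) = Fintype.card ι - 1 := by
  set T := Fintype.linearCombination k fun i => ∑ p ∈ Cp i, w p • p
  obtain ⟨p, hp⟩ := nonempty_of_sum_ne_zero (hw₁.symm ▸ one_ne_zero : ∑ p ∈ C, w p ≠ 0)
  obtain ⟨i₀, -, -⟩ := mem_biUnion.1 (hunion ▸ hp)
  have : Nonempty ι := ⟨i₀⟩
  have hker : LinearMap.ker T = k ∙ (1 : ι → k) := by
    refine le_antisymm (fun a ha => mem_span_singleton.2 ⟨a i₀, funext fun j => ?_⟩) ?_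
    · have hconst := eq_of_sum_smul_blockSum_eq_zero hC hw hw₁ hwC hne hdisj hunion
        (by simpa [T, Fintype.linearCombination_apply] using ha) i₀ j
      simp [hconst]
    · rw [span_le, Set.singleton_subset_iff, SetLike.mem_coe, LinearMap.mem_ker,
        Fintype.linearCombination_apply]
      simpa [← sum_biUnion (hdisj.set_pairwise _), ← hunion] using hwC
  have hrank := T.finrank_range_add_finrank_ker
  rw [hker, finrank_span_singleton one_ne_zero, Fintype.range_linearCombination,
    finrank_fintype_fun_eq_card] at hrank
  omega

end BlockSums

theorem GenPos.affineIndependent {d : ℕ} {C : Finset (EuclideanSpace ℝ (Fin d))}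
    (hC : GenPos C) (hcard : C.card ≤ d + 1) :
    AffineIndependent ℝ ((↑) : C → EuclideanSpace ℝ (Fin d)) := by
  by_contra hdep
  have h2 : 2 ≤ C.card := by
    by_contra! h
    have : Subsingleton C := card_le_one_iff_subsingleton_coe.1 (by omega)
    exact hdep (affineIndependent_of_subsingleton ℝ _)
  set r := finrank ℝ (vectorSpan ℝ (C : Set (EuclideanSpace ℝ (Fin d))))
  have hr : r ≤ C.card - 2 := by
    have := (finrank_vectorSpan_le_iff_not_affineIndependent ℝ
      ((↑) : C → EuclideanSpace ℝ (Fin d)) (n := C.card - 2) (by simp; omega)).2 hdep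
    rwa [Subtype.range_coe_subtype] at this
  obtain ⟨S, hSC, hS⟩ := exists_subset_card_eq (show r + 2 ≤ C.card by omega)
  exact hC.1 r (by omega) S hSC hS ⟨affineSpan ℝ C, by rw [direction_affineSpan],
    (coe_subset.2 hSC).trans (subset_affineSpan ℝ _)⟩

/-- Representatives for a partition: if `C ⊆ ℝ^d` is in general position with
`|C| ≤ d + 1` and `0 ∈ conv C`, and `C₁, …, C_m` is a partition of `C` into
`m ≥ 2` nonempty pairwise disjoint sets, then there are nonzero points
`c' i ∈ pos (C i)` with `0 ∈ conv {c'_1, …, c'_m}` and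
`dim lsp {c'_1, …, c'_m} = m - 1`. -/
theorem representatives_exist (d m : ℕ) (hm : 2 ≤ m)
    (C : Finset (EuclideanSpace ℝ (Fin d))) (hgp : GenPos C)
    (hcard : C.card ≤ d + 1)
    (h0 : (0 : EuclideanSpace ℝ (Fin d)) ∈
      convexHull ℝ ((C : Set (EuclideanSpace ℝ (Fin d)))))
    (Cp : Fin m → Finset (EuclideanSpace ℝ (Fin d)))
    (hne : ∀ i, (Cp i).Nonempty)
    (hdisj : ∀ i j, i ≠ j → Disjoint (Cp i) (Cp j))
    (hunion : C = Finset.univ.biUnion Cp) :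
    ∃ c' : Fin m → EuclideanSpace ℝ (Fin d),
      (∀ i, c' i ∈ posCone (Cp i) ∧ c' i ≠ 0) ∧
      (0 : EuclideanSpace ℝ (Fin d)) ∈ convexHull ℝ (Set.range c') ∧
      Module.finrank ℝ (Submodule.span ℝ (Set.range c')) = m - 1 := by
  have hdisj' : Pairwise (Disjoint on Cp) := fun i j hij => hdisj i j hij
  have : Nontrivial (Fin m) := Fin.nontrivial_iff_two_le.2 hm
  have hCp : ∀ i, Cp i ⊂ C := hunion ▸ ssubset_biUnion_of_pairwise_disjoint hne hdisj'
  obtain ⟨w, hw₀, hw₁, hwC⟩ := mem_convexHull'.1 h0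
  have hwpos : ∀ p ∈ C, 0 < w p := fun p hp =>
    pos_of_sum_smul_eq_zero_of_forall_ssubset hgp.2 hw₀ hw₁ hwC hp
  have hsum : ∑ i, ∑ p ∈ Cp i, w p • p = 0 := by
    rw [← hwC, hunion, sum_biUnion (hdisj'.set_pairwise _)]
  refine ⟨fun i => ∑ p ∈ Cp i, w p • p,
    fun i => ⟨⟨w, fun p hp => hw₀ p ((hCp i).1 hp), rfl⟩, fun h => ?_⟩, ?_, ?_⟩
  · exact hgp.2 _ (hCp i) (zero_mem_convexHull_of_sum_smul_eq_zero_s6 (z := id)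
      (fun p hp => hw₀ p ((hCp i).1 hp)) (sum_pos (fun p hp => hwpos p ((hCp i).1 hp)) (hne i))
      (fun p hp => hp) h)
  · exact zero_mem_convexHull_of_sum_smul_eq_zero_s6 (t := univ) (w := fun _ => (1 : ℝ))
      (fun _ _ => zero_le_one) (by simp; omega) (fun i _ => Set.mem_range_self i)
      (by simpa using hsum)
  · rw [finrank_span_range_blockSum (hgp.affineIndependent hcard)
      (fun p hp => (hwpos p hp).ne') hw₁ hwC hne hdisj' hunion, Fintype.card_fin]
end

section
/- Let d ≥ 1 and let P_1, …, P_{d+1} ⊆ ℝ^d be pairwise disjoint finite sets with |P_i| ≤ d+1 and 0 ∈ conv(P_i) for every i = 1, …, d+1. Then there exists a set C ⊆ P_1 ∪ … ∪ P_{d+1} with 0 ∈ conv(C) and |C ∩ P_i| ≤ ⌈(d+1)/2⌉ for every i, i.e., a ⌈(d+1)/2⌉-colorful choice containing the origin in its convex hull. -/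
/-!
Bárány's colorful Carathéodory argument gives even a `1`-colorful choice. Among all transversals
`f` (one point of each color), take a point `y` of minimal norm in the union of the hulls
`conv (range f)`. If `y ≠ 0`, then `y` minimizes the norm on its own hull, so that hull lies in
the half-space `⟪y, ·⟫ ≥ ‖y‖²`, and Carathéodory writes `y` as a positive combination of
affinely independent points of the transversal, which must then all lie on the hyperplane
`⟪y, ·⟫ = ‖y‖²`. There are at most `d` of them, so some color is unused; swapping its point for a
point `p` of that color with `⟪y, p⟫ ≤ 0` gives a transversal whose hull comes closer to the
origin. Hence `y = 0`.
-/

open Finset Module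
open scoped RealInnerProductSpace

section AffineCombination

variable {k V ι : Type*} [Field k] [AddCommGroup V] [Module k V]

theorem AffineIndependent.linearIndependent_of_apply_eq_s7 {p : ι → V}
    (hp : AffineIndependent k p) (ℓ : V →ₗ[k] k) {c : k} (hc : c ≠ 0) (hℓ : ∀ i, ℓ (p i) = c) :
    LinearIndependent k p := by
  refine linearIndependent_iff'.2 fun s g hg => hp.eq_zero_of_sum_eq_zero ?_ hg
  have h := congrArg ℓ hg
  simp only [map_sum, map_smul, hℓ, smul_eq_mul, ← Finset.sum_mul, map_zero] at h
  exact (mul_eq_zero.1 h).resolve_right hc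

end AffineCombination

section PositiveCombination

variable {𝕜 E ι : Type*} [Field 𝕜] [LinearOrder 𝕜] [IsStrictOrderedRing 𝕜]
  [AddCommGroup E] [Module 𝕜 E] [Fintype ι]

theorem apply_eq_of_sum_smul_eq_of_forall_le (ℓ : E →ₗ[𝕜] 𝕜) {z : ι → E} {w : ι → 𝕜} {x : E}
    (hw : ∀ i, 0 < w i) (hw₁ : ∑ i, w i = 1) (hx : ∑ i, w i • z i = x)
    (hle : ∀ i, ℓ x ≤ ℓ (z i)) (i : ι) : ℓ (z i) = ℓ x := by
  have hℓx : ∑ j, w j * ℓ (z j) = ℓ x := by simp [← hx, map_sum]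
  have hsum : ∑ j, w j * (ℓ (z j) - ℓ x) = 0 := by
    simp only [mul_sub, Finset.sum_sub_distrib, hℓx, ← Finset.sum_mul, hw₁, one_mul, sub_self]
  have hterm := (Finset.sum_eq_zero_iff_of_nonneg fun j _ =>
    mul_nonneg (hw j).le (sub_nonneg.2 (hle j))).1 hsum i (Finset.mem_univ i)
  exact sub_eq_zero.1 ((mul_eq_zero.1 hterm).resolve_left (hw i).ne')

end PositiveCombination

section ColorfulCaratheodory

variable {E : Type*} [NormedAddCommGroup E] [InnerProductSpace ℝ E]

theorem norm_sq_le_inner_of_isMinOn {K : Set E} (hK : Convex ℝ K) {y w : E} (hy : y ∈ K)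
    (hmin : IsMinOn (‖·‖) K y) (hw : w ∈ K) : ‖y‖ ^ 2 ≤ ⟪y, w⟫ := by
  have : Nonempty K := ⟨⟨y, hy⟩⟩
  have hinf : ‖0 - y‖ = ⨅ v : K, ‖0 - (v : E)‖ := by
    refine le_antisymm (le_ciInf fun v => ?_)
      (ciInf_le (f := fun v : K => ‖0 - (v : E)‖) ⟨0, ?_⟩ ⟨y, hy⟩)
    · simpa using isMinOn_iff.1 hmin v v.2
    · rintro _ ⟨v, rfl⟩
      exact norm_nonneg _
  have h := (norm_eq_iInf_iff_real_inner_le_zero hK hy).1 hinf w hw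
  rw [zero_sub, inner_neg_left, inner_sub_right, real_inner_self_eq_norm_sq] at h
  linarith

variable [FiniteDimensional ℝ E] {ι : Type*} [Fintype ι] [DecidableEq ι]

theorem exists_transversal_norm_lt (hcard : finrank ℝ E < Fintype.card ι) (P : ι → Finset E)
    (h0 : ∀ i, (0 : E) ∈ convexHull ℝ (P i : Set E)) {f : ι → E} (hf : f ∈ Fintype.piFinset P)
    {y : E} (hy : y ∈ convexHull ℝ (Set.range f))
    (hmin : IsMinOn (‖·‖) (convexHull ℝ (Set.range f)) y) (hy0 : y ≠ 0) :
    ∃ f' ∈ Fintype.piFinset P, ∃ v ∈ convexHull ℝ (Set.range f'), ‖v‖ < ‖y‖ := by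
  have hy2 : 0 < ‖y‖ ^ 2 := by positivity
  obtain ⟨κ, _, z, w, hzf, hzind, hw, hw₁, hwz⟩ := eq_pos_convex_span_of_mem_convexHull hy
  have hz : ∀ k, ⟪y, z k⟫ = ‖y‖ ^ 2 := by
    have := apply_eq_of_sum_smul_eq_of_forall_le (innerₗ E y) hw hw₁ hwz fun k => by
      simpa [real_inner_self_eq_norm_sq] using norm_sq_le_inner_of_isMinOn
        (convex_convexHull ℝ _) hy hmin (subset_convexHull ℝ _ (hzf ⟨k, rfl⟩))
    simpa [real_inner_self_eq_norm_sq] using this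
  have hκ : Fintype.card κ < Fintype.card ι :=
    ((hzind.linearIndependent_of_apply_eq_s7 (innerₗ E y) hy2.ne' hz).fintype_card_le_finrank).trans_lt
      hcard
  choose g hg using fun k => hzf ⟨k, rfl⟩
  obtain ⟨i, hi⟩ : ∃ i, i ∉ Set.range g := by
    by_contra! hsurj
    exact (Fintype.card_le_of_surjective g hsurj).not_gt hκ
  obtain ⟨p, hp, hpy⟩ := ((innerₗ E y).concaveOn convex_univ).exists_le_of_mem_convexHull
    (Set.subset_univ _) (h0 i)
  set f' := Function.update f i p with hf'
  have hzf' : ∀ k, z k ∈ Set.range f' := fun k =>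
    ⟨g k, by rw [hf', Function.update_of_ne (fun h => hi ⟨k, h⟩), hg]⟩
  have hf'P : f' ∈ Fintype.piFinset P := by
    refine Fintype.mem_piFinset.2 fun j => ?_
    rcases eq_or_ne j i with rfl | hj
    · simpa [hf'] using hp
    · simpa [hf', hj] using Fintype.mem_piFinset.1 hf j
  have hyf' : y ∈ convexHull ℝ (Set.range f') := hwz ▸ (convex_convexHull ℝ _).sum_mem
    (fun k _ => (hw k).le) hw₁ fun k _ => subset_convexHull ℝ _ (hzf' k)
  have hpf' : p ∈ convexHull ℝ (Set.range f') :=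
    subset_convexHull ℝ _ ⟨i, Function.update_self i p f⟩
  refine ⟨f', hf'P, ?_⟩
  by_contra! hmin'
  have := norm_sq_le_inner_of_isMinOn (convex_convexHull ℝ _) hyf' (isMinOn_iff.2 hmin') hpf'
  simp only [innerₗ_apply_apply, inner_zero_right] at hpy
  linarith

theorem exists_transversal_zero_mem_convexHull (hcard : finrank ℝ E < Fintype.card ι)
    (P : ι → Finset E) (h0 : ∀ i, (0 : E) ∈ convexHull ℝ (P i : Set E)) :
    ∃ f ∈ Fintype.piFinset P, (0 : E) ∈ convexHull ℝ (Set.range f) := by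
  set K := ⋃ f ∈ Fintype.piFinset P, convexHull ℝ (Set.range f)
  have hK : IsCompact K := (Fintype.piFinset P).isCompact_biUnion fun f _ =>
    (Set.finite_range f).isCompact_convexHull ℝ
  obtain ⟨i₀⟩ : Nonempty ι := Fintype.card_pos_iff.1 (hcard.trans_le' (Nat.zero_le _))
  obtain ⟨f, hf⟩ := Fintype.piFinset_nonempty.2 fun i =>
    Finset.coe_nonempty.1 (convexHull_nonempty_iff.1 ⟨0, h0 i⟩)
  have hKne : K.Nonempty :=
    ⟨f i₀, Set.mem_iUnion₂.2 ⟨f, hf, subset_convexHull ℝ _ ⟨i₀, rfl⟩⟩⟩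
  obtain ⟨y, hyK, hmin⟩ := hK.exists_isMinOn hKne continuous_norm.continuousOn
  obtain ⟨f, hf, hy⟩ := Set.mem_iUnion₂.1 hyK
  refine ⟨f, hf, ?_⟩
  obtain rfl : y = 0 := by
    by_contra hy0
    obtain ⟨f', hf', v, hv, hlt⟩ := exists_transversal_norm_lt hcard P h0 hf hy
      (hmin.on_subset (Set.subset_biUnion_of_mem (u := fun f => convexHull ℝ (Set.range f)) hf))
      hy0
    exact (isMinOn_iff.1 hmin v (Set.mem_iUnion₂.2 ⟨f', hf', hv⟩)).not_gt hlt
  exact hy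

end ColorfulCaratheodory

theorem half_colorful_choice_general (d : ℕ)
    (P : Fin (d + 1) → Finset (EuclideanSpace ℝ (Fin d)))
    (hdisj : ∀ i j, i ≠ j → Disjoint (P i) (P j))
    (h0 : ∀ i, (0 : EuclideanSpace ℝ (Fin d)) ∈
      convexHull ℝ ((P i : Set (EuclideanSpace ℝ (Fin d))))) :
    ∃ C : Finset (EuclideanSpace ℝ (Fin d)),
      C ⊆ Finset.univ.biUnion P ∧
      (0 : EuclideanSpace ℝ (Fin d)) ∈
        convexHull ℝ ((C : Set (EuclideanSpace ℝ (Fin d)))) ∧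
      ∀ i, (C ∩ P i).card ≤ (d + 2) / 2 := by
  obtain ⟨f, hf, hf0⟩ := exists_transversal_zero_mem_convexHull (by simp) P h0
  have hfP : ∀ i, f i ∈ P i := Fintype.mem_piFinset.1 hf
  refine ⟨univ.image f, fun z hz => ?_, by simpa using hf0, fun i => ?_⟩
  · obtain ⟨j, -, rfl⟩ := mem_image.1 hz
    exact mem_biUnion.2 ⟨j, mem_univ j, hfP j⟩
  · have hsub : univ.image f ∩ P i ⊆ {f i} := by
      intro z hz
      obtain ⟨⟨j, -, rfl⟩, hzi⟩ := And.imp_left mem_image.1 (mem_inter.1 hz)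
      obtain rfl : j = i := by_contra fun hji => disjoint_left.1 (hdisj j i hji) (hfP j) hzi
      exact mem_singleton_self _
    have := card_le_card hsub
    rw [card_singleton] at this
    omega

/-- Given `d + 1` pairwise disjoint color classes in `ℝ^d`, each of size at
most `d + 1` and each containing the origin in its convex hull, there is a
`⌈(d+1)/2⌉`-colorful choice containing the origin in its convex hull, i.e. a
set `C` of points of the classes with `0 ∈ conv C` that uses at most
`⌈(d+1)/2⌉` points of each color class. -/
theorem half_colorful_choice (d : ℕ) (hd : 1 ≤ d)
    (P : Fin (d + 1) → Finset (EuclideanSpace ℝ (Fin d)))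
    (hdisj : ∀ i j, i ≠ j → Disjoint (P i) (P j))
    (hcard : ∀ i, (P i).card ≤ d + 1)
    (h0 : ∀ i, (0 : EuclideanSpace ℝ (Fin d)) ∈
      convexHull ℝ ((P i : Set (EuclideanSpace ℝ (Fin d))))) :
    ∃ C : Finset (EuclideanSpace ℝ (Fin d)),
      C ⊆ Finset.univ.biUnion P ∧
      (0 : EuclideanSpace ℝ (Fin d)) ∈
        convexHull ℝ ((C : Set (EuclideanSpace ℝ (Fin d)))) ∧
      ∀ i, (C ∩ P i).card ≤ (d + 2) / 2 :=
  half_colorful_choice_general d P hdisj h0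
end

section
/- Let d ≥ 1 and, for i = 1, …, d+1, let C_i ⊆ ℝ^d be a finite set in general position with 0 ∈ conv(C_i), and let C_i = C_{i,1} ∪ C_{i,2} be a partition of C_i into two nonempty disjoint sets. Then there exists a function s : {1, …, d+1} → {1, 2} such that 0 ∈ conv(⋃_{i=1}^{d+1} C_{i,s(i)}). -/
open scoped Classical

/-- Given `d + 1` finite sets `C i ⊆ ℝ^d` in general position, each containing
the origin in its convex hull, and a partition of each `C i` into two nonempty
disjoint parts `Cp i 0` and `Cp i 1`, one part can be selected from each set
so that the union of the selected parts contains the origin in its convex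
hull. -/
theorem select_halves (d : ℕ) (hd : 1 ≤ d)
    (C : Fin (d + 1) → Finset (EuclideanSpace ℝ (Fin d)))
    (hgp : ∀ i, GenPos (C i))
    (h0 : ∀ i, (0 : EuclideanSpace ℝ (Fin d)) ∈
      convexHull ℝ ((C i : Set (EuclideanSpace ℝ (Fin d)))))
    (Cp : Fin (d + 1) → Fin 2 → Finset (EuclideanSpace ℝ (Fin d)))
    (hne : ∀ i j, (Cp i j).Nonempty)
    (hdisj : ∀ i, Disjoint (Cp i 0) (Cp i 1))
    (hunion : ∀ i, C i = Cp i 0 ∪ Cp i 1) :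
    ∃ s : Fin (d + 1) → Fin 2,
      (0 : EuclideanSpace ℝ (Fin d)) ∈
        convexHull ℝ ((Finset.univ.biUnion fun i => Cp i (s i) :
          Set (EuclideanSpace ℝ (Fin d)))) := by
  classical
  -- extract convex weights
  have hw : ∀ i, ∃ w : EuclideanSpace ℝ (Fin d) → ℝ,
      (∀ x ∈ C i, 0 ≤ w x) ∧ (∑ x ∈ C i, w x) = 1 ∧
      (∑ x ∈ C i, w x • x) = 0 := by
    intro i
    have h := h0 i
    rw [Finset.convexHull_eq] at h
    obtain ⟨w, hw0, hw1, hwc⟩ := h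
    refine ⟨w, hw0, hw1, ?_⟩
    rw [Finset.centerMass_eq_of_sum_1 _ _ hw1] at hwc
    simpa using hwc
  choose w hw0 hw1 hwc using hw
  -- subsets are proper
  have hsub : ∀ i (j : Fin 2), Cp i j ⊆ C i := by
    intro i j x hx
    rw [hunion i]
    fin_cases j
    · exact Finset.mem_union_left _ hx
    · exact Finset.mem_union_right _ hx
  have hss : ∀ i (j : Fin 2), Cp i j ⊂ C i := by
    intro i j
    rw [Finset.ssubset_def]
    refine ⟨hsub i j, ?_⟩
    intro hsub'
    fin_cases j
    · obtain ⟨y, hy⟩ := hne i 1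
      have hy0 : y ∈ Cp i 0 := hsub' ((hsub i 1) hy)
      exact (Finset.disjoint_left.mp (hdisj i) hy0) hy
    · obtain ⟨y, hy⟩ := hne i 0
      have hy1 : y ∈ Cp i 1 := hsub' ((hsub i 0) hy)
      exact (Finset.disjoint_left.mp (hdisj i) hy) hy1
  -- sum splits
  have hsplitR : ∀ i (f : EuclideanSpace ℝ (Fin d) → ℝ),
      ∑ x ∈ C i, f x = ∑ x ∈ Cp i 0, f x + ∑ x ∈ Cp i 1, f x := by
    intro i f; rw [hunion i, Finset.sum_union (hdisj i)]
  have hsplitE : ∀ i (f : EuclideanSpace ℝ (Fin d) → EuclideanSpace ℝ (Fin d)),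
      ∑ x ∈ C i, f x = ∑ x ∈ Cp i 0, f x + ∑ x ∈ Cp i 1, f x := by
    intro i f; rw [hunion i, Finset.sum_union (hdisj i)]
  have hposgen : ∀ i (j j' : Fin 2), C i = Cp i j ∪ Cp i j' →
      Disjoint (Cp i j) (Cp i j') → 0 < ∑ x ∈ Cp i j, w i x := by
    intro i j j' hu hdj
    have hnn : ∀ x ∈ Cp i j, 0 ≤ w i x := fun x hx =>
      hw0 i x (by rw [hu]; exact Finset.mem_union_left _ hx)
    rcases (Finset.sum_nonneg hnn).lt_or_eq with h | h
    · exact h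
    exfalso
    have hzero : ∀ x ∈ Cp i j, w i x = 0 :=
      (Finset.sum_eq_zero_iff_of_nonneg hnn).mp h.symm
    have hsR : ∑ x ∈ Cp i j', w i x = 1 := by
      have h1 := hw1 i
      rw [hu, Finset.sum_union hdj] at h1
      linarith [h.symm]
    have hsE : ∑ x ∈ Cp i j', w i x • x = 0 := by
      have h1 := hwc i
      rw [hu, Finset.sum_union hdj] at h1
      have hz2 : ∑ x ∈ Cp i j, w i x • x = 0 :=
        Finset.sum_eq_zero (fun x hx => by rw [hzero x hx, zero_smul])
      rw [hz2, zero_add] at h1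
      exact h1
    have hmem : (0 : EuclideanSpace ℝ (Fin d)) ∈
        convexHull ℝ ((Cp i j' : Set (EuclideanSpace ℝ (Fin d)))) := by
      have := Finset.centerMass_mem_convexHull (Cp i j')
        (fun x hx => hw0 i x (by rw [hu]; exact Finset.mem_union_right _ hx))
        (by rw [hsR]; norm_num)
        (fun x hx => Finset.mem_coe.mpr hx) (z := id)
      rwa [Finset.centerMass_eq_of_sum_1 _ _ hsR,
        show (∑ x ∈ Cp i j', w i x • id x) = 0 from hsE] at this
    exact (hgp i).2 (Cp i j') (hss i j') hmem
  have hpos : ∀ i (j : Fin 2), 0 < ∑ x ∈ Cp i j, w i x := by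
    intro i j
    have hj : j = 0 ∨ j = 1 := by fin_cases j <;> simp
    rcases hj with rfl | rfl
    · exact hposgen i 0 1 (hunion i) (hdisj i)
    · exact hposgen i 1 0 (by rw [hunion i, Finset.union_comm]) (hdisj i).symm
  -- the vectors v i
  set v : Fin (d + 1) → EuclideanSpace ℝ (Fin d) := fun i => ∑ x ∈ Cp i 0, w i x • x with hv
  have hv1 : ∀ i, ∑ x ∈ Cp i 1, w i x • x = -v i := by
    intro i
    have := hsplitE i (fun x => w i x • x)
    rw [hwc i] at this
    simp only [hv]
    linear_combination (norm := module) -this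
  -- linear dependence
  have hdep : ¬ LinearIndependent ℝ v := by
    intro h
    have hcard := h.fintype_card_le_finrank
    rw [finrank_euclideanSpace_fin, Fintype.card_fin] at hcard
    omega
  rw [Fintype.not_linearIndependent_iff] at hdep
  obtain ⟨μ, hμsum, i0, hi0⟩ := hdep
  -- the selection
  refine ⟨fun i => if 0 ≤ μ i then 0 else 1, ?_⟩
  set s : Fin (d + 1) → Fin 2 := fun i => if 0 ≤ μ i then 0 else 1 with hs
  set t : Finset ((i : Fin (d + 1)) × EuclideanSpace ℝ (Fin d)) :=
    Finset.univ.sigma (fun i => Cp i (s i)) with ht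
  have hWnn : ∀ p ∈ t, 0 ≤ |μ p.1| * w p.1 p.2 := by
    rintro ⟨i, x⟩ hp
    rw [ht, Finset.mem_sigma] at hp
    exact mul_nonneg (abs_nonneg _) (hw0 i x (hsub i (s i) hp.2))
  have hWsum : 0 < ∑ p ∈ t, |μ p.1| * w p.1 p.2 := by
    rw [ht, Finset.sum_sigma]
    dsimp only
    refine Finset.sum_pos' (fun i _ => Finset.sum_nonneg
      (fun x hx => mul_nonneg (abs_nonneg _) (hw0 i x (hsub i (s i) hx))))
      ⟨i0, Finset.mem_univ _, ?_⟩
    rw [← Finset.mul_sum]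
    exact mul_pos (abs_pos.mpr hi0) (hpos i0 (s i0))
  have hWtot : ∑ p ∈ t, (|μ p.1| * w p.1 p.2) • p.2 = 0 := by
    rw [ht, Finset.sum_sigma]
    dsimp only
    have heach : ∀ i : Fin (d + 1),
        ∑ x ∈ Cp i (s i), (|μ i| * w i x) • x = μ i • v i := by
      intro i
      rcases le_or_gt 0 (μ i) with h | h
      · have hsi : s i = 0 := by simp [hs, h]
        rw [hsi]
        rw [abs_of_nonneg h]
        rw [show (∑ x ∈ Cp i 0, (μ i * w i x) • x) = μ i • ∑ x ∈ Cp i 0, w i x • x by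
          rw [Finset.smul_sum]; exact Finset.sum_congr rfl (fun x _ => (mul_smul _ _ _))]
      · have hsi : s i = 1 := by simp [hs, not_le.mpr h]
        rw [hsi]
        rw [abs_of_neg h]
        rw [show (∑ x ∈ Cp i 1, (-μ i * w i x) • x) = (-μ i) • ∑ x ∈ Cp i 1, w i x • x by
          rw [Finset.smul_sum]; exact Finset.sum_congr rfl (fun x _ => (mul_smul _ _ _))]
        rw [hv1 i, smul_neg, neg_smul, neg_neg]
    calc ∑ i : Fin (d+1), ∑ x ∈ Cp i (s i), (|μ i| * w i x) • x
        = ∑ i : Fin (d+1), μ i • v i := Finset.sum_congr rfl (fun i _ => heach i)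
      _ = 0 := hμsum
  have hmem := Finset.centerMass_mem_convexHull t hWnn hWsum
    (z := fun p => p.2)
    (s := ((Finset.univ.biUnion fun i => Cp i (s i) : Finset (EuclideanSpace ℝ (Fin d))) :
      Set (EuclideanSpace ℝ (Fin d))))
    (by
      rintro ⟨i, x⟩ hp
      rw [ht, Finset.mem_sigma] at hp
      exact Finset.mem_coe.mpr (Finset.mem_biUnion.mpr ⟨i, Finset.mem_univ _, hp.2⟩))
  rwa [Finset.centerMass, hWtot, smul_zero] at hmem
end

section
/- Let d ≥ 1 and let P_1, …, P_{⌊d/2⌋+1} ⊆ ℝ^d be pairwise disjoint finite sets with |P_i| ≤ d+1 and 0 ∈ conv(P_i) for every i = 1, …, ⌊d/2⌋+1. Then there exists a set C ⊆ P_1 ∪ … ∪ P_{⌊d/2⌋+1} with 0 ∈ conv(C) and |C ∩ P_i| ≤ ⌈d/2⌉+1 for every i, i.e., a (⌈d/2⌉+1)-colorful choice containing the origin in its convex hull. -/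
/-!
Split every class `P k`, `k ≥ 1`, into two halves `A k`, `B k`. As `0 ∈ conv (P k)`, there are
`a k ∈ conv (A k)` and `b k ∈ conv (B k)` with the origin between them, so every real multiple of
`a k` is a nonnegative multiple of a point of `conv (A k)` or of `conv (B k)`. It therefore suffices
to find `S ⊆ P 0` and a nontrivial relation `μ • y + ∑ c k • a k = 0` with `μ ≥ 0`,
`y ∈ conv S`: if the `⌊d/2⌋` vectors `a k` are dependent, take `μ = 0`; otherwise apply
Carathéodory's theorem in the `⌈d/2⌉`-dimensional quotient `ℝ^d ⧸ span (a k)` to `P 0`.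
-/

open Finset Module Function

variable {E : Type*} [AddCommGroup E] [Module ℝ E]

theorem zero_mem_convexHull_of_sum_smul_eq_zero_s9 {ι : Type*} [Fintype ι] {s : Set E}
    {w : ι → ℝ} {z : ι → E} (hw : ∀ i, 0 ≤ w i) (hpos : ∃ i, 0 < w i)
    (hz : ∀ i, z i ∈ convexHull ℝ s) (hsum : ∑ i, w i • z i = 0) :
    (0 : E) ∈ convexHull ℝ s := by
  obtain ⟨i, hi⟩ := hpos
  have hwpos : 0 < ∑ i, w i :=
    Finset.sum_pos' (fun i _ => hw i) ⟨i, mem_univ i, hi⟩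
  simpa [Finset.centerMass, hsum] using
    (convex_convexHull ℝ s).centerMass_mem (fun i _ => hw i) hwpos (fun i _ => hz i)

theorem Finset.exists_union_eq_card_le_half {α : Type*} [DecidableEq α] {P : Finset α}
    (hP : P.Nonempty) :
    ∃ A B : Finset α, A ∪ B = P ∧ A.Nonempty ∧ B.Nonempty ∧
      #A ≤ (#P + 1) / 2 ∧ #B ≤ (#P + 1) / 2 := by
  have hhalf : 0 < (#P + 1) / 2 := by have := hP.card_pos; omega
  obtain ⟨A, hAP, hA⟩ := exists_subset_card_eq (s := P) (n := (#P + 1) / 2) (by omega)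
  obtain ⟨B, hAB, hBP, hB⟩ := exists_subsuperset_card_eq (sdiff_subset (s := P) (t := A))
    (n := (#P + 1) / 2) (by rw [card_sdiff_of_subset hAP]; omega) (by omega)
  refine ⟨A, B, ?_, card_pos.1 (hA ▸ hhalf), card_pos.1 (hB ▸ hhalf), hA.le, hB.le⟩
  exact (union_subset hAP hBP).antisymm fun p hp => by
    by_cases hpA : p ∈ A
    · exact mem_union_left _ hpA
    · exact mem_union_right _ (hAB (mem_sdiff.2 ⟨hp, hpA⟩))

theorem Finset.biUnion_inter_subset_of_pairwise_disjoint {ι α : Type*} [Fintype ι]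
    [DecidableEq α] {P Q : ι → Finset α} (hQP : ∀ i, Q i ⊆ P i)
    (hP : Pairwise (Disjoint on P)) (i : ι) :
    univ.biUnion Q ∩ P i ⊆ Q i := by
  intro p hp
  obtain ⟨hpQ, hpP⟩ := mem_inter.1 hp
  obtain ⟨j, -, hj⟩ := mem_biUnion.1 hpQ
  by_cases hji : j = i
  · exact hji ▸ hj
  · exact (disjoint_left.1 (hP hji) (hQP j hj) hpP).elim

theorem Finset.exists_halves_of_zero_mem_convexHull {P : Finset E}
    (h0 : (0 : E) ∈ convexHull ℝ (P : Set E)) :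
    ∃ A ⊆ P, ∃ B ⊆ P, #A ≤ (#P + 1) / 2 ∧ #B ≤ (#P + 1) / 2 ∧
      ∃ a ∈ convexHull ℝ (A : Set E), ∃ b ∈ convexHull ℝ (B : Set E),
        ∃ t : ℝ, 0 < t ∧ t • a = -b := by
  classical
  obtain ⟨A, B, hAB, hA, hB, hAc, hBc⟩ :=
    exists_union_eq_card_le_half (convexHull_nonempty_iff.1 ⟨0, h0⟩)
  have hAP : A ⊆ P := hAB ▸ subset_union_left
  have hBP : B ⊆ P := hAB ▸ subset_union_right
  rw [← hAB, coe_union, convexHull_union (coe_nonempty.2 hA) (coe_nonempty.2 hB),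
    mem_convexJoin] at h0
  obtain ⟨a, ha, b, hb, hab⟩ := h0
  rw [mem_segment_iff_sameRay, zero_sub, sub_zero] at hab
  -- If `a` or `b` is the origin, that half alone serves as both halves.
  by_cases ha0 : a = 0
  · exact ⟨A, hAP, A, hAP, hAc, hAc, 0, ha0 ▸ ha, 0, ha0 ▸ ha, 1, one_pos, by simp⟩
  by_cases hb0 : b = 0
  · exact ⟨B, hBP, B, hBP, hBc, hBc, 0, hb0 ▸ hb, 0, hb0 ▸ hb, 1, one_pos, by simp⟩
  obtain ⟨t, ht, htab⟩ := hab.exists_pos_left (neg_ne_zero.2 ha0) hb0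
  exact ⟨A, hAP, B, hBP, hAc, hBc, a, ha, b, hb, t, ht, by rw [← htab, smul_neg, neg_neg]⟩

theorem exists_nonneg_smul_convexHull_eq_smul {A B : Finset E} {a b : E} {t : ℝ}
    (ha : a ∈ convexHull ℝ (A : Set E)) (hb : b ∈ convexHull ℝ (B : Set E)) (ht : 0 < t)
    (hab : t • a = -b) (c : ℝ) :
    ∃ D : Finset E, (D = A ∨ D = B) ∧ ∃ l : ℝ, 0 ≤ l ∧ (c ≠ 0 → 0 < l) ∧
      ∃ z ∈ convexHull ℝ (D : Set E), l • z = c • a := by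
  rcases le_or_gt 0 c with hc | hc
  · exact ⟨A, Or.inl rfl, c, hc, hc.lt_of_ne', a, ha, rfl⟩
  · have hl : 0 < -c / t := div_pos (neg_pos.2 hc) ht
    refine ⟨B, Or.inr rfl, -c / t, hl.le, fun _ => hl, b, hb, ?_⟩
    rw [← neg_neg b, ← hab, smul_neg, smul_smul, ← neg_smul]
    congr 1
    field_simp

variable [FiniteDimensional ℝ E]

theorem exists_subset_card_le_finrank_quotient_add_one (W : Submodule ℝ E)
    (Q : Finset E) {x : E} (hx : x ∈ convexHull ℝ (Q : Set E)) (hxW : x ∈ W) :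
    ∃ S ⊆ Q, #S ≤ finrank ℝ (E ⧸ W) + 1 ∧ ∃ y ∈ convexHull ℝ (S : Set E), y ∈ W := by
  classical
  -- Carathéodory in `E ⧸ W`; `g` lifts the affinely independent points back to `Q`.
  have hx' : W.mkQ x ∈ convexHull ℝ (W.mkQ '' Q) := by
    rw [← LinearMap.image_convexHull]
    exact Set.mem_image_of_mem _ hx
  rw [convexHull_eq_union] at hx'
  simp only [Set.mem_iUnion] at hx'
  obtain ⟨t, htQ, hind, hxt⟩ := hx'
  set g := invFunOn W.mkQ (Q : Set E)
  have hg : ∀ q ∈ t, g q ∈ Q ∧ W.mkQ (g q) = q := fun q hq =>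
    ⟨invFunOn_mem (htQ hq), invFunOn_eq (htQ hq)⟩
  have himage : (t.image g).image W.mkQ = t := by
    rw [image_image]
    exact (image_congr fun q hq => (hg q hq).2).trans image_id
  refine ⟨t.image g, fun p hp => ?_, ?_, ?_⟩
  · obtain ⟨q, hq, rfl⟩ := mem_image.1 hp
    exact (hg q hq).1
  · calc #(t.image g) ≤ #t := card_image_le
      _ = Fintype.card t := (Fintype.card_coe t).symm
      _ ≤ _ := hind.card_le_finrank_succ.trans (Nat.add_le_add_right (Submodule.finrank_le _) 1)
  · rw [← himage, coe_image, ← LinearMap.image_convexHull] at hxt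
    obtain ⟨y, hy, hyx⟩ := hxt
    refine ⟨y, hy, ?_⟩
    have : y - x ∈ W := (Submodule.Quotient.eq W).1 hyx
    simpa using W.add_mem this hxW

theorem exists_relation_convexHull_subset_card_le (P : Finset E)
    (h0 : (0 : E) ∈ convexHull ℝ (P : Set E)) {n : ℕ} (a : Fin n → E) :
    ∃ S ⊆ P, #S ≤ finrank ℝ E - n + 1 ∧ ∃ y ∈ convexHull ℝ (S : Set E),
      ∃ μ : ℝ, 0 ≤ μ ∧ ∃ c : Fin n → ℝ, (0 < μ ∨ ∃ k, c k ≠ 0) ∧ μ • y + ∑ k, c k • a k = 0 := by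
  by_cases hli : LinearIndependent ℝ a
  · obtain ⟨S, hSP, hS, y, hy, hyW⟩ :=
      exists_subset_card_le_finrank_quotient_add_one (Submodule.span ℝ (Set.range a)) P h0
        (Submodule.zero_mem _)
    rw [Submodule.finrank_quotient, finrank_span_eq_card hli, Fintype.card_fin] at hS
    obtain ⟨c, hc⟩ := (Submodule.mem_span_range_iff_exists_fun ℝ).1 (neg_mem hyW)
    exact ⟨S, hSP, hS, y, hy, 1, zero_le_one, c, Or.inl one_pos, by simp [hc]⟩
  · obtain ⟨c, hc, k, hk⟩ := Fintype.not_linearIndependent_iff.1 hli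
    obtain ⟨p, hp⟩ := convexHull_nonempty_iff.1 ⟨0, h0⟩
    exact ⟨{p}, singleton_subset_iff.2 hp, by simp, p, subset_convexHull ℝ _ (by simp), 0, le_rfl,
      c, Or.inr ⟨k, hk⟩, by simp [hc]⟩

theorem exists_colorful_choice_zero_mem_convexHull [DecidableEq E] {n : ℕ}
    (P : Fin (n + 1) → Finset E) (h0 : ∀ i, (0 : E) ∈ convexHull ℝ (P i : Set E)) :
    ∃ Q : Fin (n + 1) → Finset E, (∀ i, Q i ⊆ P i) ∧
      (0 : E) ∈ convexHull ℝ (univ.biUnion Q : Set E) ∧ #(Q 0) ≤ finrank ℝ E - n + 1 ∧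
      ∀ k : Fin n, #(Q k.succ) ≤ (#(P k.succ) + 1) / 2 := by
  choose A hAP B hBP hA hB a ha b hb t ht hab using
    fun k : Fin n => exists_halves_of_zero_mem_convexHull (h0 k.succ)
  obtain ⟨S, hSP, hS, y, hy, μ, hμ, c, hnontriv, hrel⟩ :=
    exists_relation_convexHull_subset_card_le (P 0) (h0 0) a
  choose D hD l hl hlpos z hz hzl using
    fun k => exists_nonneg_smul_convexHull_eq_smul (ha k) (hb k) (ht k) (hab k) (c k)
  have hDP : ∀ k, D k ⊆ P k.succ := fun k => by
    rcases hD k with h | h <;> rw [h]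
    exacts [hAP k, hBP k]
  let Q : Fin (n + 1) → Finset E := Fin.cons S D
  refine ⟨Q, Fin.cases hSP hDP, ?_, hS, fun k => ?_⟩
  · have hmono : ∀ i, convexHull ℝ (Q i : Set E) ⊆ convexHull ℝ (univ.biUnion Q : Set E) :=
      fun i => convexHull_mono (coe_subset.2 (subset_biUnion_of_mem Q (mem_univ i)))
    refine zero_mem_convexHull_of_sum_smul_eq_zero_s9 (w := Fin.cons μ l) (z := Fin.cons y z)
      (Fin.cases hμ hl) ?_ (Fin.cases (hmono 0 hy) fun k => hmono k.succ (hz k)) ?_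
    · rcases hnontriv with hμ | ⟨k, hk⟩
      · exact ⟨0, hμ⟩
      · exact ⟨k.succ, hlpos k hk⟩
    · simpa [Fin.sum_univ_succ, hzl] using hrel
  · change #(D k) ≤ _
    rcases hD k with h | h <;> rw [h]
    exacts [hA k, hB k]

theorem simple_dimension_reduction_choice_general (d : ℕ)
    (P : Fin (d / 2 + 1) → Finset (EuclideanSpace ℝ (Fin d)))
    (hdisj : ∀ i j, i ≠ j → Disjoint (P i) (P j))
    (hcard : ∀ i, (P i).card ≤ d + 1)
    (h0 : ∀ i, (0 : EuclideanSpace ℝ (Fin d)) ∈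
      convexHull ℝ ((P i : Set (EuclideanSpace ℝ (Fin d))))) :
    ∃ C : Finset (EuclideanSpace ℝ (Fin d)),
      C ⊆ Finset.univ.biUnion P ∧
      (0 : EuclideanSpace ℝ (Fin d)) ∈
        convexHull ℝ ((C : Set (EuclideanSpace ℝ (Fin d)))) ∧
      ∀ i, (C ∩ P i).card ≤ (d + 1) / 2 + 1 := by
  obtain ⟨Q, hQP, hQ0, hQcard0, hQcard⟩ := exists_colorful_choice_zero_mem_convexHull P h0
  rw [finrank_euclideanSpace_fin] at hQcard0
  refine ⟨univ.biUnion Q, biUnion_mono fun i _ => hQP i, hQ0, fun i => ?_⟩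
  refine (card_le_card (biUnion_inter_subset_of_pairwise_disjoint hQP
    (fun i j => hdisj i j) i)).trans (Fin.cases ?_ (fun k => ?_) i)
  · omega
  · have := hQcard k
    have := hcard k.succ
    omega

/-- Given `⌊d/2⌋ + 1` pairwise disjoint color classes in `ℝ^d`, each of size
at most `d + 1` and each containing the origin in its convex hull, there is a
`(⌈d/2⌉ + 1)`-colorful choice containing the origin in its convex hull. -/
theorem simple_dimension_reduction_choice (d : ℕ) (hd : 1 ≤ d)
    (P : Fin (d / 2 + 1) → Finset (EuclideanSpace ℝ (Fin d)))
    (hdisj : ∀ i j, i ≠ j → Disjoint (P i) (P j))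
    (hcard : ∀ i, (P i).card ≤ d + 1)
    (h0 : ∀ i, (0 : EuclideanSpace ℝ (Fin d)) ∈
      convexHull ℝ ((P i : Set (EuclideanSpace ℝ (Fin d))))) :
    ∃ C : Finset (EuclideanSpace ℝ (Fin d)),
      C ⊆ Finset.univ.biUnion P ∧
      (0 : EuclideanSpace ℝ (Fin d)) ∈
        convexHull ℝ ((C : Set (EuclideanSpace ℝ (Fin d)))) ∧
      ∀ i, (C ∩ P i).card ≤ (d + 1) / 2 + 1 :=
  simple_dimension_reduction_choice_general d P hdisj hcard h0
end

section
/- Let v ∈ ℝ^d with v ≠ 0, and let P_1, P_2 ⊆ ℝ^d be finite sets with v ∈ pos(P_1) and −v ∈ pos(P_2). Let π : ℝ^d → ℝ^d be the orthogonal projection onto the hyperplane {x ∈ ℝ^d : ⟨x, v⟩ = 0}, and let Q ⊆ ℝ^d be a finite set with 0 ∈ conv(π(Q)). Then 0 ∈ conv(Q ∪ P_1) or 0 ∈ conv(Q ∪ P_2). -/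
theorem zero_mem_convexHull_union_of_smul_add_smul_eq_zero {E : Type*} [AddCommGroup E]
    [Module ℝ E] {s t : Set E} {x y : E} {a b : ℝ}
    (hx : x ∈ convexHull ℝ s) (hy : y ∈ convexHull ℝ t) (ha : 0 ≤ a) (hb : 0 ≤ b)
    (hab : 0 < a + b) (h : a • x + b • y = 0) :
    (0 : E) ∈ convexHull ℝ (s ∪ t) := by
  have hcomb : (a / (a + b)) • x + (b / (a + b)) • y = 0 := by
    rw [div_eq_inv_mul, div_eq_inv_mul, mul_smul, mul_smul, ← smul_add, h, smul_zero]
  rw [← hcomb]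
  exact convex_convexHull ℝ _ (convexHull_mono Set.subset_union_left hx)
    (convexHull_mono Set.subset_union_right hy) (by positivity) (by positivity)
    (by rw [← add_div, div_self hab.ne'])

theorem exists_smul_eq_of_zero_mem_convexHull_image_orthogonalProjection
    {F : Type*} [NormedAddCommGroup F] [InnerProductSpace ℝ F]
    {v : F} {s : Set F}
    (hs : (0 : F) ∈ convexHull ℝ
      ((fun x => ((Submodule.span ℝ {v})ᗮ.orthogonalProjectionOnto x : F)) '' s)) :
    ∃ x ∈ convexHull ℝ s, ∃ t : ℝ, t • v = x := by
  set K := (Submodule.span ℝ {v})ᗮ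
  rw [show (fun x => (K.orthogonalProjectionOnto x : F)) =
      K.subtype ∘ₗ (K.orthogonalProjectionOnto : F →ₗ[ℝ] K) from rfl,
    ← LinearMap.image_convexHull] at hs
  obtain ⟨x, hx, hπx⟩ := hs
  have hxK : x ∈ Kᗮ :=
    Submodule.orthogonalProjectionOnto_eq_zero_iff.1 (Subtype.ext hπx)
  rw [Submodule.orthogonal_orthogonal] at hxK
  exact ⟨x, hx, Submodule.mem_span_singleton.1 hxK⟩

section PosCone

variable {d : ℕ} {P : Finset (EuclideanSpace ℝ (Fin d))} {w : EuclideanSpace ℝ (Fin d)}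

theorem smul_mem_posCone {r : ℝ} (hr : 0 ≤ r) (hw : w ∈ posCone P) : r • w ∈ posCone P := by
  obtain ⟨μ, hμ, rfl⟩ := hw
  refine ⟨fun p => r * μ p, fun p hp => mul_nonneg hr (hμ p hp), ?_⟩
  simp only [Finset.smul_sum, mul_smul]

theorem eq_zero_or_exists_pos_smul_mem_convexHull_of_mem_posCone (hw : w ∈ posCone P) :
    w = 0 ∨ ∃ c : ℝ, 0 < c ∧ c • w ∈ convexHull ℝ (P : Set (EuclideanSpace ℝ (Fin d))) := by
  obtain ⟨μ, hμ, rfl⟩ := hw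
  rcases (Finset.sum_nonneg hμ).eq_or_lt with hsum | hsum
  · left
    have hzero := (Finset.sum_eq_zero_iff_of_nonneg hμ).1 hsum.symm
    exact Finset.sum_eq_zero fun p hp => by rw [hzero p hp, zero_smul]
  · right
    refine ⟨(∑ p ∈ P, μ p)⁻¹, inv_pos.2 hsum, ?_⟩
    exact P.centerMass_mem_convexHull hμ hsum fun p hp => hp

theorem zero_mem_convexHull_union_of_add_mem_posCone {s : Set (EuclideanSpace ℝ (Fin d))}
    {x : EuclideanSpace ℝ (Fin d)} (hx : x ∈ convexHull ℝ s) (hw : w ∈ posCone P)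
    (h : x + w = 0) :
    (0 : EuclideanSpace ℝ (Fin d)) ∈ convexHull ℝ (s ∪ P) := by
  rcases eq_zero_or_exists_pos_smul_mem_convexHull_of_mem_posCone hw with rfl | ⟨c, hc, hcw⟩
  · rw [add_zero] at h
    exact convexHull_mono Set.subset_union_left (h ▸ hx)
  · refine zero_mem_convexHull_union_of_smul_add_smul_eq_zero hx hcw hc.le zero_le_one
      (by linarith) ?_
    rw [one_smul, ← smul_add, h, smul_zero]

end PosCone

theorem combine_with_one_side_general (d : ℕ) (v : EuclideanSpace ℝ (Fin d))
    (P₁ P₂ : Finset (EuclideanSpace ℝ (Fin d)))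
    (hv₁ : v ∈ posCone P₁) (hv₂ : -v ∈ posCone P₂)
    (Q : Finset (EuclideanSpace ℝ (Fin d)))
    (hQ : (0 : EuclideanSpace ℝ (Fin d)) ∈
      convexHull ℝ ((fun x : EuclideanSpace ℝ (Fin d) =>
          ((Submodule.orthogonalProjectionOnto ((Submodule.span ℝ {v})ᗮ) x :
            EuclideanSpace ℝ (Fin d)))) '' (Q : Set (EuclideanSpace ℝ (Fin d))))) :
    (0 : EuclideanSpace ℝ (Fin d)) ∈
        convexHull ℝ ((Q : Set (EuclideanSpace ℝ (Fin d))) ∪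
          (P₁ : Set (EuclideanSpace ℝ (Fin d)))) ∨
      (0 : EuclideanSpace ℝ (Fin d)) ∈
        convexHull ℝ ((Q : Set (EuclideanSpace ℝ (Fin d))) ∪
          (P₂ : Set (EuclideanSpace ℝ (Fin d)))) := by
  obtain ⟨x, hxQ, t, rfl⟩ := exists_smul_eq_of_zero_mem_convexHull_image_orthogonalProjection hQ
  rcases le_total t 0 with ht | ht
  · refine .inl (zero_mem_convexHull_union_of_add_mem_posCone hxQ
      (smul_mem_posCone (neg_nonneg.2 ht) hv₁) ?_)
    rw [neg_smul, add_neg_cancel]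
  · refine .inr (zero_mem_convexHull_union_of_add_mem_posCone hxQ
      (smul_mem_posCone ht hv₂) ?_)
    rw [smul_neg, add_neg_cancel]

/-- Let `v ≠ 0` with `v ∈ pos P₁` and `-v ∈ pos P₂`, and let `Q` be a finite
set whose orthogonal projection onto the hyperplane orthogonal to `v`
contains the origin in its convex hull. Then `0 ∈ conv (Q ∪ P₁)` or
`0 ∈ conv (Q ∪ P₂)`. -/
theorem combine_with_one_side (d : ℕ) (v : EuclideanSpace ℝ (Fin d)) (hv : v ≠ 0)
    (P₁ P₂ : Finset (EuclideanSpace ℝ (Fin d)))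
    (hv₁ : v ∈ posCone P₁) (hv₂ : -v ∈ posCone P₂)
    (Q : Finset (EuclideanSpace ℝ (Fin d)))
    (hQ : (0 : EuclideanSpace ℝ (Fin d)) ∈
      convexHull ℝ ((fun x : EuclideanSpace ℝ (Fin d) =>
          ((Submodule.orthogonalProjectionOnto ((Submodule.span ℝ {v})ᗮ) x :
            EuclideanSpace ℝ (Fin d)))) '' (Q : Set (EuclideanSpace ℝ (Fin d))))) :
    (0 : EuclideanSpace ℝ (Fin d)) ∈
        convexHull ℝ ((Q : Set (EuclideanSpace ℝ (Fin d))) ∪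
          (P₁ : Set (EuclideanSpace ℝ (Fin d)))) ∨
      (0 : EuclideanSpace ℝ (Fin d)) ∈
        convexHull ℝ ((Q : Set (EuclideanSpace ℝ (Fin d))) ∪
          (P₂ : Set (EuclideanSpace ℝ (Fin d)))) :=
  combine_with_one_side_general d v P₁ P₂ hv₁ hv₂ Q hQ
end

section
/- Let d ≥ 1, let P_1, …, P_N ⊆ ℝ^d be pairwise disjoint finite color classes, and let m ≥ 1. For i = 1, …, d+1, let C_i ⊆ P_1 ∪ … ∪ P_N be a set with |C_i| ≤ d+1, 0 ∈ conv(C_i), and |C_i ∩ P_j| ≤ m for every j (i.e., each C_i is an m-colorful choice). Assume additionally that every color class intersects at most one of the sets C_1, …, C_{d+1}, i.e., for every j there is at most one index i with C_i ∩ P_j ≠ ∅. Then there exists a set C ⊆ C_1 ∪ … ∪ C_{d+1} with 0 ∈ conv(C) and |C ∩ P_j| ≤ ⌈m/2⌉ for every j. -/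
open scoped Classical

/-!
Split each `C i` into two halves `A i` and `C i \ A i`, each with at most `⌈m/2⌉` points of
every color. Either some half already has `0` in its convex hull, or for every `i` the origin lies
in an open segment `α i • a i + β i • b i = 0` with `a i ∈ conv (A i)`, `b i ∈ conv (C i \ A i)`.
The `d + 1` vectors `α i • a i = -(β i • b i)` of `ℝ^d` are linearly dependent, and the signs in a
dependency `∑ c i • α i • a i = 0` choose one half of each `C i` (`A i` if `c i ≥ 0`) such that `0`
is a nonnegative, nontrivial combination of points in their convex hulls. As every color meets only
one `C i`, the union of the chosen halves is still `⌈m/2⌉`-colorful.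
-/

open Finset Function

section Convex

variable {ι 𝕜 E : Type*} [Field 𝕜] [LinearOrder 𝕜] [IsStrictOrderedRing 𝕜]
  [AddCommGroup E] [Module 𝕜 E]

theorem exists_mem_openSegment_of_mem_convexHull_union {s t : Set E} {x : E}
    (h : x ∈ convexHull 𝕜 (s ∪ t)) (hs : x ∉ convexHull 𝕜 s) (ht : x ∉ convexHull 𝕜 t) :
    ∃ a ∈ convexHull 𝕜 s, ∃ b ∈ convexHull 𝕜 t, x ∈ openSegment 𝕜 a b := by
  rcases s.eq_empty_or_nonempty with rfl | hs₀
  · exact absurd (by simpa using h) ht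
  rcases t.eq_empty_or_nonempty with rfl | ht₀
  · exact absurd (by simpa using h) hs
  rw [convexHull_union hs₀ ht₀, mem_convexJoin] at h
  obtain ⟨a, ha, b, hb, hx⟩ := h
  rw [← insert_endpoints_openSegment] at hx
  rcases hx with rfl | rfl | hx
  exacts [absurd ha hs, absurd hb ht, ⟨a, ha, b, hb, hx⟩]

variable [FiniteDimensional 𝕜 E] [Fintype ι]

theorem exists_zero_mem_convexHull_range_of_zero_mem_openSegment
    (hι : Module.finrank 𝕜 E < Fintype.card ι) {a b : ι → E}
    (h : ∀ i, (0 : E) ∈ openSegment 𝕜 (a i) (b i)) :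
    ∃ e : ι → E, (∀ i, e i = a i ∨ e i = b i) ∧ (0 : E) ∈ convexHull 𝕜 (Set.range e) := by
  choose α β hα hβ _ hαβ using h
  obtain ⟨c, hc, i₀, hi₀⟩ := Fintype.not_linearIndependent_iff.1
    (mt LinearIndependent.fintype_card_le_finrank hι.not_ge :
      ¬ LinearIndependent 𝕜 fun i => α i • a i)
  set e : ι → E := fun i => if 0 ≤ c i then a i else b i
  set ω : ι → 𝕜 := fun i => if 0 ≤ c i then c i * α i else -c i * β i
  have hω_smul : ∀ i, ω i • e i = c i • α i • a i := by
    intro i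
    simp only [ω, e]
    split_ifs
    · rw [mul_smul]
    · rw [mul_smul, neg_smul, ← smul_neg, ← eq_neg_of_add_eq_zero_left (hαβ i)]
  have hω_nonneg : ∀ i, 0 ≤ ω i := by
    intro i
    simp only [ω]
    split_ifs with hci
    · exact mul_nonneg hci (hα i).le
    · exact mul_nonneg (by linarith) (hβ i).le
  have hω_pos : 0 < ω i₀ := by
    simp only [ω]
    split_ifs with hci
    · exact mul_pos (lt_of_le_of_ne hci hi₀.symm) (hα i₀)
    · exact mul_pos (by linarith) (hβ i₀)
  have hcenter : univ.centerMass ω e = 0 := by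
    simp only [centerMass, hω_smul, hc, smul_zero]
  refine ⟨e, fun i => by by_cases hci : 0 ≤ c i <;> simp [e, hci], hcenter ▸ ?_⟩
  exact univ.centerMass_mem_convexHull (fun i _ => hω_nonneg i)
    (sum_pos' (fun i _ => hω_nonneg i) ⟨i₀, mem_univ _, hω_pos⟩) fun i _ => Set.mem_range_self i

theorem exists_zero_mem_convexHull_iUnion_of_zero_mem_convexHull_union
    (hι : Module.finrank 𝕜 E < Fintype.card ι) (s t : ι → Set E)
    (h : ∀ i, (0 : E) ∈ convexHull 𝕜 (s i ∪ t i)) :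
    ∃ u : ι → Set E, (∀ i, u i = s i ∨ u i = t i) ∧ (0 : E) ∈ convexHull 𝕜 (⋃ i, u i) := by
  by_cases hs : ∃ i, (0 : E) ∈ convexHull 𝕜 (s i)
  · obtain ⟨i, hi⟩ := hs
    exact ⟨s, fun _ => .inl rfl, convexHull_mono (Set.subset_iUnion s i) hi⟩
  by_cases ht : ∃ i, (0 : E) ∈ convexHull 𝕜 (t i)
  · obtain ⟨i, hi⟩ := ht
    exact ⟨t, fun _ => .inr rfl, convexHull_mono (Set.subset_iUnion t i) hi⟩
  push Not at hs ht
  choose a ha b hb hab using fun i =>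
    exists_mem_openSegment_of_mem_convexHull_union (h i) (hs i) (ht i)
  obtain ⟨e, he, h0⟩ := exists_zero_mem_convexHull_range_of_zero_mem_openSegment hι hab
  refine ⟨fun i => if e i = a i then s i else t i,
    fun i => by by_cases hi : e i = a i <;> simp [hi], ?_⟩
  refine convexHull_min ?_ (convex_convexHull 𝕜 _) h0
  rintro - ⟨i, rfl⟩
  refine convexHull_mono (Set.subset_iUnion _ i) ?_
  split_ifs with hi
  · exact hi ▸ ha i
  · exact (he i).resolve_left hi ▸ hb i

end Convex

section Colorful

variable {α κ : Type*} [DecidableEq α]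

def IsColorful (P : κ → Finset α) (m : ℕ) (C : Finset α) : Prop :=
  ∀ j, #(C ∩ P j) ≤ m

theorem IsColorful.exists_halves [Fintype κ] {P : κ → Finset α} (hP : Pairwise (Disjoint on P))
    {m : ℕ} {X : Finset α} (hX : IsColorful P m X) :
    ∃ A ⊆ X, IsColorful P ((m + 1) / 2) A ∧ IsColorful P ((m + 1) / 2) (X \ A) := by
  choose H hHX hH using fun j => exists_subset_card_eq (Nat.div_le_self #(X ∩ P j) 2)
  have hA : ∀ j, univ.biUnion H ∩ P j = H j := by
    intro j
    ext x
    simp only [mem_inter, mem_biUnion, mem_univ, true_and]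
    refine ⟨fun ⟨⟨j', hx⟩, hxj⟩ => ?_, fun hx => ⟨⟨j, hx⟩, (mem_inter.1 (hHX j hx)).2⟩⟩
    obtain rfl : j' = j := by
      by_contra hne
      exact disjoint_left.1 (hP hne) (mem_inter.1 (hHX j' hx)).2 hxj
    exact hx
  have hAX : univ.biUnion H ⊆ X := biUnion_subset.2 fun j _ => (hHX j).trans inter_subset_left
  refine ⟨univ.biUnion H, hAX, fun j => ?_, fun j => ?_⟩
  · have := hX j
    rw [hA, hH]
    omega
  · have := hX j
    rw [sdiff_inter_right_comm, card_sdiff, ← inter_assoc, inter_eq_left.2 hAX, hA, hH]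
    omega

theorem IsColorful.biUnion {ι : Type*} {P : κ → Finset α} {m : ℕ} {s : Finset ι}
    {S : ι → Finset α} (hS : ∀ i ∈ s, IsColorful P m (S i))
    (hone : ∀ j, {i | (S i ∩ P j).Nonempty}.Subsingleton) : IsColorful P m (s.biUnion S) := by
  intro j
  rw [biUnion_inter]
  by_cases h : ∃ i ∈ s, (S i ∩ P j).Nonempty
  · obtain ⟨i, hi, hij⟩ := h
    refine (card_le_card (biUnion_subset.2 fun i' _ => ?_)).trans (hS i hi j)
    rcases (S i' ∩ P j).eq_empty_or_nonempty with hi'j | hi'j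
    · simp [hi'j]
    · rw [hone j hi'j hij]
  · have hempty : s.biUnion (fun i => S i ∩ P j) = ∅ := eq_empty_of_forall_notMem fun x hx => by
      obtain ⟨i, hi, hx⟩ := mem_biUnion.1 hx
      exact h ⟨i, hi, x, hx⟩
    simp [hempty]

end Colorful

theorem combine_colorful_choices_general (d N : ℕ) (m : ℕ)
    (P : Fin N → Finset (EuclideanSpace ℝ (Fin d)))
    (hdisj : ∀ j j', j ≠ j' → Disjoint (P j) (P j'))
    (C : Fin (d + 1) → Finset (EuclideanSpace ℝ (Fin d)))
    (h0 : ∀ i, (0 : EuclideanSpace ℝ (Fin d)) ∈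
      convexHull ℝ ((C i : Set (EuclideanSpace ℝ (Fin d)))))
    (hm' : ∀ i j, (C i ∩ P j).card ≤ m)
    (hone : ∀ (j : Fin N) (i i' : Fin (d + 1)),
      (C i ∩ P j).Nonempty → (C i' ∩ P j).Nonempty → i = i') :
    ∃ D : Finset (EuclideanSpace ℝ (Fin d)),
      D ⊆ Finset.univ.biUnion C ∧
      (0 : EuclideanSpace ℝ (Fin d)) ∈
        convexHull ℝ ((D : Set (EuclideanSpace ℝ (Fin d)))) ∧
      ∀ j, (D ∩ P j).card ≤ (m + 1) / 2 := by
  choose A hAC hA hA' using fun i =>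
    IsColorful.exists_halves (fun j j' => hdisj j j') (X := C i) (hm' i)
  have hdim : Module.finrank ℝ (EuclideanSpace ℝ (Fin d)) < Fintype.card (Fin (d + 1)) := by
    simp
  obtain ⟨u, hu, hu0⟩ := exists_zero_mem_convexHull_iUnion_of_zero_mem_convexHull_union hdim
    (fun i => ↑(A i)) (fun i => ↑(C i \ A i))
    fun i => by rw [← coe_union, union_sdiff_of_subset (hAC i)]; exact h0 i
  have hhalf : ∀ i, ∃ S : Finset (EuclideanSpace ℝ (Fin d)),
      ↑S = u i ∧ (S = A i ∨ S = C i \ A i) := fun i =>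
    (hu i).elim (fun h => ⟨A i, h.symm, .inl rfl⟩) fun h => ⟨C i \ A i, h.symm, .inr rfl⟩
  choose S hSu hS using hhalf
  have hSC : ∀ i, S i ⊆ C i := fun i => (hS i).elim (· ▸ hAC i) (· ▸ sdiff_subset)
  refine ⟨univ.biUnion S, biUnion_mono fun i _ => hSC i, by simpa [hSu] using hu0, ?_⟩
  refine IsColorful.biUnion (fun i _ => (hS i).elim (· ▸ hA i) (· ▸ hA' i)) ?_
  exact fun j i hi i' hi' => hone j i i' (Nonempty.mono (inter_subset_inter_right (hSC i)) hi)
    (Nonempty.mono (inter_subset_inter_right (hSC i')) hi')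

/-- Combining `d + 1` `m`-colorful choices (with respect to pairwise disjoint
color classes `P 1, …, P N`), each of size at most `d + 1`, each containing
the origin in its convex hull, and such that every color class meets at most
one of them, yields an `⌈m/2⌉`-colorful choice containing the origin in its
convex hull. -/
theorem combine_colorful_choices (d N : ℕ) (hd : 1 ≤ d) (m : ℕ) (hm : 1 ≤ m)
    (P : Fin N → Finset (EuclideanSpace ℝ (Fin d)))
    (hdisj : ∀ j j', j ≠ j' → Disjoint (P j) (P j'))
    (C : Fin (d + 1) → Finset (EuclideanSpace ℝ (Fin d)))
    (hsub : ∀ i, C i ⊆ Finset.univ.biUnion P)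
    (hcard : ∀ i, (C i).card ≤ d + 1)
    (h0 : ∀ i, (0 : EuclideanSpace ℝ (Fin d)) ∈
      convexHull ℝ ((C i : Set (EuclideanSpace ℝ (Fin d)))))
    (hm' : ∀ i j, (C i ∩ P j).card ≤ m)
    (hone : ∀ (j : Fin N) (i i' : Fin (d + 1)),
      (C i ∩ P j).Nonempty → (C i' ∩ P j).Nonempty → i = i') :
    ∃ D : Finset (EuclideanSpace ℝ (Fin d)),
      D ⊆ Finset.univ.biUnion C ∧
      (0 : EuclideanSpace ℝ (Fin d)) ∈
        convexHull ℝ ((D : Set (EuclideanSpace ℝ (Fin d)))) ∧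
      ∀ j, (D ∩ P j).card ≤ (m + 1) / 2 :=
  combine_colorful_choices_general d N m P hdisj C h0 hm' hone
end

section
/- Let P, Q ⊆ ℝ^d be disjoint finite sets with 0 ∈ conv(P) and 0 ∈ conv(Q), and suppose that P is in general position. Let k be an integer with 2 ≤ k ≤ |P|. Then there exists a set C ⊆ P ∪ Q with 0 ∈ conv(C), |C ∩ P| ≤ |P| − ⌊|P|/k⌋, and |C ∩ Q| ≤ d − k + 2. (Applied with |P| = d+1 and k = Θ(√d), this yields a (d − Θ(√d))-colorful choice containing the origin in its convex hull for two color classes.) -/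
open scoped Classical

/-!
By minimality, `P` is affinely independent and `0 = ∑ w_p p` with all `w_p > 0`. Split `P` into
`k` blocks `B_i` of size at least `⌊|P|/k⌋` and put `a_i = ∑_{p ∈ B_i} w_p p`. Then `∑ a_i = 0`,
and by affine independence the only linear relations among the `a_i` are the constant ones, so
`Z = lsp{a_i}` has dimension `k - 1`. Carathéodory in `ℝ^d ⧸ Z` gives `R ⊆ Q` with
`|R| ≤ d - k + 2` and a point `z ∈ conv R ∩ Z`. Writing `z = ∑ c_i a_i` with `c_{i₀}` maximal,
`-z = ∑ (c_{i₀} - c_i) a_i ∈ pos(P \ B_{i₀})`, hence `0 ∈ conv(R ∪ (P \ B_{i₀}))`.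
-/

open Finset Module

section Convex

variable {𝕜 E : Type*} [Field 𝕜] [LinearOrder 𝕜] [IsStrictOrderedRing 𝕜]
  [AddCommGroup E] [Module 𝕜 E]

theorem affineIndependent_of_forall_ssubset_zero_notMem_convexHull {P : Finset E}
    (h0 : (0 : E) ∈ convexHull 𝕜 (P : Set E))
    (hmin : ∀ S ⊂ P, (0 : E) ∉ convexHull 𝕜 (S : Set E)) :
    AffineIndependent 𝕜 ((↑) : P → E) := by
  rw [convexHull_eq_union] at h0
  simp only [Set.mem_iUnion] at h0
  obtain ⟨t, htP, ht, h0t⟩ := h0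
  obtain rfl : t = P := by
    by_contra hne
    exact hmin t (ssubset_of_subset_of_ne (coe_subset.1 htP) hne) h0t
  exact ht

theorem exists_pos_weights_of_forall_ssubset_zero_notMem_convexHull {P : Finset E}
    (h0 : (0 : E) ∈ convexHull 𝕜 (P : Set E))
    (hmin : ∀ S ⊂ P, (0 : E) ∉ convexHull 𝕜 (S : Set E)) :
    ∃ w : E → 𝕜, (∀ p ∈ P, 0 < w p) ∧ ∑ p ∈ P, w p = 1 ∧ ∑ p ∈ P, w p • p = 0 := by
  obtain ⟨w, hw0, hw1, hw⟩ := mem_convexHull'.1 h0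
  refine ⟨w, fun p hp => (hw0 p hp).lt_of_ne fun hwp => ?_, hw1, hw⟩
  refine hmin (P.erase p) (erase_ssubset hp) (mem_convexHull'.2 ⟨w, ?_, ?_, ?_⟩)
  · exact fun q hq => hw0 q (mem_of_mem_erase hq)
  · rwa [sum_erase _ hwp.symm]
  · rwa [sum_erase _ (by rw [← hwp, zero_smul])]

theorem zero_mem_convexHull_union_of_neg_mem_hull {s t : Set E} {z : E}
    (hz : z ∈ convexHull 𝕜 s) (hzt : -z ∈ PointedCone.hull 𝕜 t) :
    (0 : E) ∈ convexHull 𝕜 (s ∪ t) := by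
  obtain ⟨c, hct, hc0, hcz⟩ := PointedCone.mem_hull_set.1 hzt
  have hzK : z ∈ convexHull 𝕜 (s ∪ t) := convexHull_mono Set.subset_union_left hz
  rcases c.support.eq_empty_or_nonempty with hT | hT
  · obtain rfl : z = 0 := by simpa [Finsupp.sum, hT] using hcz.symm
    exact hzK
  set r := ∑ x ∈ c.support, c x
  have hr : 0 < r := sum_pos (fun x hx => (hc0 x).lt_of_ne' (Finsupp.mem_support_iff.1 hx)) hT
  have hy : c.support.centerMass c id ∈ convexHull 𝕜 (s ∪ t) :=
    convexHull_mono (hct.trans Set.subset_union_right)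
      (c.support.centerMass_id_mem_convexHull (fun x _ => hc0 x) hr)
  have hry : r • c.support.centerMass c id = -z := by
    rw [centerMass, smul_smul, mul_inv_cancel₀ hr.ne', one_smul]
    exact hcz
  have h1r : 0 < 1 + r := by linarith
  convert (convex_convexHull 𝕜 (s ∪ t)) hzK hy (inv_pos.2 h1r).le (div_pos hr h1r).le
    (by field_simp) using 1
  rw [div_eq_inv_mul, mul_smul, hry, ← smul_add, add_neg_cancel, smul_zero]

theorem exists_nonneg_sum_smul_eq_neg_of_mem_span {ι : Type*} [Fintype ι] [Nonempty ι]
    {a : ι → E} (ha : ∑ i, a i = 0) {z : E} (hz : z ∈ Submodule.span 𝕜 (Set.range a)) :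
    ∃ i₀ : ι, ∃ c : ι → 𝕜, (∀ i, 0 ≤ c i) ∧ c i₀ = 0 ∧ ∑ i, c i • a i = -z := by
  obtain ⟨b, rfl⟩ := (Submodule.mem_span_range_iff_exists_fun 𝕜).1 hz
  obtain ⟨i₀, -, hi₀⟩ := univ.exists_max_image b univ_nonempty
  refine ⟨i₀, fun i => b i₀ - b i, fun i => sub_nonneg.2 (hi₀ i (mem_univ i)), sub_self _, ?_⟩
  simp only [sub_smul, sum_sub_distrib, ← smul_sum, ha, smul_zero, zero_sub]

theorem Submodule.exists_subset_card_le_finrank_quotient_add_one [FiniteDimensional 𝕜 E]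
    (Z : Submodule 𝕜 E) {Q : Finset E} (h0 : (0 : E) ∈ convexHull 𝕜 (Q : Set E)) :
    ∃ R ⊆ Q, #R ≤ finrank 𝕜 (E ⧸ Z) + 1 ∧ (convexHull 𝕜 (R : Set E) ∩ Z).Nonempty := by
  have h0' : (0 : E ⧸ Z) ∈ convexHull 𝕜 (Z.mkQ '' Q) := by
    rw [← LinearMap.image_convexHull]
    exact ⟨0, h0, map_zero _⟩
  obtain ⟨ι, _, y, w, hyQ, hy, hw0, hw1, hwy⟩ := eq_pos_convex_span_of_mem_convexHull h0'
  choose q hqQ hqy using fun i => hyQ (Set.mem_range_self i)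
  refine ⟨univ.image q, image_subset_iff.2 fun i _ => hqQ i, ?_, ∑ i, w i • q i, ?_, ?_⟩
  · calc #(univ.image q) ≤ Fintype.card ι := card_image_le
      _ ≤ finrank 𝕜 (vectorSpan 𝕜 (Set.range y)) + 1 := hy.card_le_finrank_succ
      _ ≤ finrank 𝕜 (E ⧸ Z) + 1 := by grw [Submodule.finrank_le]
  · exact (convex_convexHull 𝕜 _).sum_mem (fun i _ => (hw0 i).le) hw1 fun i _ =>
      subset_convexHull 𝕜 _ (mem_coe.2 (mem_image_of_mem q (mem_univ i)))
  · have hπ : Z.mkQ (∑ i, w i • q i) = 0 := by simp [map_sum, hqy, hwy]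
    rwa [mkQ_apply, Quotient.mk_eq_zero] at hπ

end Convex

theorem AffineIndependent.eq_mul_of_sum_smul_eq_zero {R E : Type*} [Ring R] [AddCommGroup E]
    [Module R E] {P : Finset E} (hP : AffineIndependent R ((↑) : P → E)) {w μ : E → R}
    (hw1 : ∑ p ∈ P, w p = 1) (hw : ∑ p ∈ P, w p • p = 0) (hμ : ∑ p ∈ P, μ p • p = 0) :
    ∀ p ∈ P, μ p = (∑ q ∈ P, μ q) * w p := by
  intro p hp
  refine hP.eq_of_sum_eq_sum (s := univ) (w₁ := fun q : P => μ q)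
    (w₂ := fun q : P => (∑ q ∈ P, μ q) * w q) ?_ ?_ ⟨p, hp⟩ (mem_univ _)
  · simp only [sum_coe_sort P (fun q => μ q), sum_coe_sort P (fun q => (∑ q ∈ P, μ q) * w q),
      ← mul_sum, hw1, mul_one]
  · simp only [mul_smul, ← smul_sum, sum_coe_sort P (fun q => μ q • q),
      sum_coe_sort P (fun q => w q • q), hw, hμ, smul_zero]

namespace Finset

theorem exists_map_fin_card_div_le_card_filter {α : Type*} [DecidableEq α] (s : Finset α)
    {k : ℕ} (hk : k ≠ 0) (hks : k ≤ #s) :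
    ∃ g : α → Fin k, ∀ i, #s / k ≤ #{x ∈ s | g x = i} := by
  obtain ⟨F, hF, hFk⟩ := Finpartition.exists_equipartition_card_eq s hk hks
  let e : F.parts ≃ Fin k := F.parts.equivFinOfCardEq hFk
  let g : α → Fin k := fun x => if hx : x ∈ s then e ⟨F.part x, F.part_mem.2 hx⟩ else ⟨0, by omega⟩
  have hg : ∀ x (hx : x ∈ s), g x = e ⟨F.part x, F.part_mem.2 hx⟩ := fun x hx => dif_pos hx
  refine ⟨g, fun i => ?_⟩
  have hfiber : {x ∈ s | g x = i} = (e.symm i : Finset α) := by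
    ext x
    simp only [mem_filter]
    constructor
    · rintro ⟨hx, hgx⟩
      rw [← hgx, hg x hx, Equiv.symm_apply_apply]
      exact F.mem_part hx
    · intro hx
      have hxs : x ∈ s := F.le (e.symm i).2 hx
      refine ⟨hxs, ?_⟩
      rw [hg x hxs, ← Equiv.eq_symm_apply]
      exact Subtype.ext (F.part_eq_of_mem (e.symm i).2 hx)
  rw [hfiber]
  simpa only [hFk] using hF.average_le_card_part (e.symm i).2

theorem card_union_inter_le_of_disjoint {α : Type*} [DecidableEq α] {s t u : Finset α}
    (h : Disjoint s u) : #((s ∪ t) ∩ u) ≤ #t :=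
  card_le_card fun _ hx =>
    (mem_union.1 (mem_inter.1 hx).1).resolve_left fun hs => disjoint_left.1 h hs (mem_inter.1 hx).2

section FiberSum

variable {R E ι : Type*} [Fintype ι] [DecidableEq ι]

section Semiring

variable [Semiring R] [AddCommMonoid E] [Module R E] (P : Finset E) (w : E → R) (g : E → ι)

def fiberSum (i : ι) : E := ∑ p ∈ P with g p = i, w p • p

theorem sum_smul_fiberSum (c : ι → R) :
    ∑ i, c i • P.fiberSum w g i = ∑ p ∈ P, (c (g p) * w p) • p := by
  rw [← sum_fiberwise P g]
  refine sum_congr rfl fun i _ => ?_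
  rw [fiberSum, smul_sum]
  refine sum_congr rfl fun p hp => ?_
  rw [(mem_filter.1 hp).2, mul_smul]

theorem sum_fiberSum : ∑ i, P.fiberSum w g i = ∑ p ∈ P, w p • p := by
  simpa using P.sum_smul_fiberSum w g 1

end Semiring

variable [AddCommGroup E] {P : Finset E} {g : E → ι}

theorem card_sub_one_le_finrank_span_fiberSum [Field R] [Module R E] {w : E → R}
    (hP : AffineIndependent R ((↑) : P → E)) (hw0 : ∀ p ∈ P, w p ≠ 0) (hw1 : ∑ p ∈ P, w p = 1)
    (hw : ∑ p ∈ P, w p • p = 0) (hg : ∀ i, ∃ p ∈ P, g p = i) :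
    Fintype.card ι - 1 ≤ finrank R (Submodule.span R (Set.range (P.fiberSum w g))) := by
  set L := Fintype.linearCombination R (P.fiberSum w g)
  have hker : LinearMap.ker L ≤ R ∙ (1 : ι → R) := by
    intro c hc
    rw [LinearMap.mem_ker, Fintype.linearCombination_apply, sum_smul_fiberSum] at hc
    have hμ := hP.eq_mul_of_sum_smul_eq_zero hw1 hw hc
    refine Submodule.mem_span_singleton.2 ⟨∑ q ∈ P, c (g q) * w q, funext fun i => ?_⟩
    obtain ⟨p, hp, rfl⟩ := hg i
    simpa using (mul_left_inj' (hw0 p hp)).1 (hμ p hp).symm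
  have hrank := L.finrank_range_add_finrank_ker
  rw [Fintype.range_linearCombination, finrank_fintype_fun_eq_card] at hrank
  have := (Submodule.finrank_mono hker).trans (finrank_span_le_card ({1} : Set (ι → R)))
  simp only [Set.toFinset_singleton, card_singleton] at this
  omega

theorem exists_neg_mem_hull_filter_ne_of_mem_span_fiberSum [Field R] [LinearOrder R]
    [IsStrictOrderedRing R] [Module R E] [Nonempty ι] {w : E → R}
    (hw0 : ∀ p ∈ P, 0 ≤ w p) (hw : ∑ p ∈ P, w p • p = 0) {z : E}
    (hz : z ∈ Submodule.span R (Set.range (P.fiberSum w g))) :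
    ∃ i₀, -z ∈ PointedCone.hull R (↑{p ∈ P | g p ≠ i₀} : Set E) := by
  obtain ⟨i₀, c, hc0, hci₀, hcz⟩ :=
    exists_nonneg_sum_smul_eq_neg_of_mem_span (by rwa [sum_fiberSum]) hz
  refine ⟨i₀, ?_⟩
  rw [← hcz, sum_smul_fiberSum]
  refine Submodule.sum_mem _ fun p hp => ?_
  by_cases hgp : g p = i₀
  · simp [hgp, hci₀]
  · exact PointedCone.smul_mem _ (mul_nonneg (hc0 _) (hw0 p hp))
      (PointedCone.subset_hull (mem_filter.2 ⟨hp, hgp⟩))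

end FiberSum

end Finset

/-- Two color classes: if `P, Q ⊆ ℝ^d` are disjoint finite sets containing the
origin in their convex hulls, `P` is in general position, and `2 ≤ k ≤ |P|`,
then there is a set `C ⊆ P ∪ Q` with `0 ∈ conv C`, at most `|P| - ⌊|P|/k⌋`
points of `P`, and at most `d - k + 2` points of `Q`. -/
theorem two_color_classes (d : ℕ) (P Q : Finset (EuclideanSpace ℝ (Fin d)))
    (hPQ : Disjoint P Q) (hgp : GenPos P)
    (h0P : (0 : EuclideanSpace ℝ (Fin d)) ∈
      convexHull ℝ ((P : Set (EuclideanSpace ℝ (Fin d)))))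
    (h0Q : (0 : EuclideanSpace ℝ (Fin d)) ∈
      convexHull ℝ ((Q : Set (EuclideanSpace ℝ (Fin d)))))
    (k : ℕ) (hk₁ : 2 ≤ k) (hk₂ : k ≤ P.card) :
    ∃ C : Finset (EuclideanSpace ℝ (Fin d)),
      C ⊆ P ∪ Q ∧
      (0 : EuclideanSpace ℝ (Fin d)) ∈
        convexHull ℝ ((C : Set (EuclideanSpace ℝ (Fin d)))) ∧
      (C ∩ P).card ≤ P.card - P.card / k ∧
      (C ∩ Q).card ≤ d + 2 - k := by
  have hPind := affineIndependent_of_forall_ssubset_zero_notMem_convexHull h0P hgp.2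
  obtain ⟨w, hw0, hw1, hw⟩ :=
    exists_pos_weights_of_forall_ssubset_zero_notMem_convexHull h0P hgp.2
  obtain ⟨g, hg⟩ := P.exists_map_fin_card_div_le_card_filter (k := k) (by omega) hk₂
  have hgsurj : ∀ i, ∃ p ∈ P, g p = i := fun i =>
    have ⟨p, hp⟩ := card_pos.1 ((Nat.div_pos hk₂ (by omega)).trans_le (hg i))
    ⟨p, mem_filter.1 hp⟩
  set Z := Submodule.span ℝ (Set.range (P.fiberSum w g))
  have hZ : k - 1 ≤ finrank ℝ Z := by
    simpa using
      card_sub_one_le_finrank_span_fiberSum hPind (fun p hp => (hw0 p hp).ne') hw1 hw hgsurj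
  obtain ⟨R, hRQ, hR, z, hzR, hzZ⟩ := Z.exists_subset_card_le_finrank_quotient_add_one h0Q
  have : Nonempty (Fin k) := ⟨⟨0, by omega⟩⟩
  obtain ⟨i₀, hi₀⟩ :=
    exists_neg_mem_hull_filter_ne_of_mem_span_fiberSum (fun p hp => (hw0 p hp).le) hw hzZ
  have hdim := Z.finrank_quotient_add_finrank
  rw [finrank_euclideanSpace_fin] at hdim
  set S := {p ∈ P | g p ≠ i₀}
  refine ⟨R ∪ S, union_subset (hRQ.trans subset_union_right)
    ((filter_subset _ _).trans subset_union_left), ?_, ?_, ?_⟩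
  · rw [coe_union]
    exact zero_mem_convexHull_union_of_neg_mem_hull hzR hi₀
  · calc #((R ∪ S) ∩ P) ≤ #S := card_union_inter_le_of_disjoint (hPQ.mono_right hRQ).symm
      _ = #P - #{p ∈ P | g p = i₀} := by
          rw [← card_filter_add_card_filter_not (s := P) (fun p => g p = i₀)]; simp [S]
      _ ≤ #P - #P / k := Nat.sub_le_sub_left (hg i₀) _
  · calc #((R ∪ S) ∩ Q) ≤ #R := by
          rw [union_comm]; exact card_union_inter_le_of_disjoint (hPQ.mono_left (filter_subset _ _))
      _ ≤ d + 2 - k := by omega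
end

section
/- In the NCP reduction from weighted 2-SAT, for every assignment A : {1,…,n} → {0,1} and every clause j ∈ {1,…,d} that is not satisfied by A, every point x ∈ conv(S_A) has j-th coordinate x_j ≥ w_j. -/
/-- NCP reduction from weighted 2-SAT, claim (i): if clause `j` is not
satisfied by the assignment `A`, then every point `x` in the convex hull of
the colorful choice `S_A = {l 1, …, l n, h 1, …, h (d+1)}` has `j`-th
coordinate at least `w j`. -/
theorem ncp_unsatisfied_clause_lower_bound (n d : ℕ) (hn : 1 ≤ n) (hd : 1 ≤ d)
    (T F : Fin d → Finset (Fin n)) (hTF : ∀ j, (T j).card + (F j).card ≤ 2)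
    (w : Fin d → ℝ) (hw : ∀ j, 0 < w j)
    (p pbar : Fin n → EuclideanSpace ℝ (Fin d))
    (hp : ∀ i j, p i j = if i ∈ T j then -(n : ℝ) * w j else w j)
    (hpbar : ∀ i j, pbar i j = if i ∈ F j then -(n : ℝ) * w j else w j)
    (h : Fin (d + 1) → EuclideanSpace ℝ (Fin d))
    (hh : ∀ j k : Fin d, h (Fin.castSucc j) k =
      if k = j then ((d : ℝ) + 1) * (((n : ℝ) + 2) - (d : ℝ) / ((d : ℝ) + 1)) * w j
      else w k)
    (hlast : ∀ k : Fin d, h (Fin.last d) k = w k)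
    (A : Fin n → Bool)
    (l : Fin n → EuclideanSpace ℝ (Fin d))
    (hl : ∀ i, l i = if A i then p i else pbar i)
    (j : Fin d)
    (hunsat : ¬ ((∃ i ∈ T j, A i = true) ∨ (∃ i ∈ F j, A i = false)))
    (x : EuclideanSpace ℝ (Fin d))
    (hx : x ∈ convexHull ℝ (Set.range l ∪ Set.range h)) :
    w j ≤ x j := by
  push_neg at hunsat
  obtain ⟨hT, hF⟩ := hunsat
  have hconv : Convex ℝ {y : EuclideanSpace ℝ (Fin d) | w j ≤ y j} := by
    exact convex_halfSpace_ge (IsLinearMap.mk (fun a b => rfl) (fun c a => rfl)) (w j)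
  have hsub : Set.range l ∪ Set.range h ⊆ {y : EuclideanSpace ℝ (Fin d) | w j ≤ y j} := by
    rintro y (⟨i, rfl⟩ | ⟨k, rfl⟩)
    · rw [hl i]
      cases hA : A i with
      | true =>
        have hnT : i ∉ T j := fun hi => hT i hi hA
        simp only [if_true, Set.mem_setOf_eq, hp i j, if_neg hnT]
        exact le_rfl
      | false =>
        have hnF : i ∉ F j := fun hi => hF i hi hA
        simp only [Bool.false_eq_true, if_false, Set.mem_setOf_eq, hpbar i j, if_neg hnF]
        exact le_rfl
    · induction k using Fin.lastCases with
      | last => simp [Set.mem_setOf_eq, hlast j]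
      | cast m =>
        simp only [Set.mem_setOf_eq, hh m j]
        by_cases hk : j = m
        · subst hk
          rw [if_pos rfl]
          have hwj := hw j
          have hd1 : (1:ℝ) ≤ (d:ℝ) := by exact_mod_cast hd
          have hn1 : (1:ℝ) ≤ (n:ℝ) := by exact_mod_cast hn
          have hdpos : (0:ℝ) < (d:ℝ) + 1 := by linarith
          have : (d:ℝ) / ((d:ℝ) + 1) ≤ 1 := by
            rw [div_le_one hdpos]; linarith
          nlinarith [mul_pos hdpos hwj]
        · simp [hk]
  have := convexHull_min hsub hconv hx
  exact this
end

section
/- In the NCP reduction from weighted 2-SAT, for every assignment A : {1,…,n} → {0,1} there exists a point x ∈ conv(S_A) such that x_j = w_j for every clause j ∈ {1,…,d} that is not satisfied by A, and x_j = 0 for every clause j that is satisfied by A. -/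
/-- NCP reduction from weighted 2-SAT, claim (ii): for every assignment `A`
there is a point `x` in the convex hull of the colorful choice
`S_A = {l 1, …, l n, h 1, …, h (d+1)}` whose `j`-th coordinate is `w j` for
every clause `j` not satisfied by `A`, and `0` for every clause `j` satisfied
by `A`. -/
theorem ncp_witness_point_exists (n d : ℕ) (hn : 1 ≤ n) (hd : 1 ≤ d)
    (T F : Fin d → Finset (Fin n)) (hTF : ∀ j, (T j).card + (F j).card ≤ 2)
    (w : Fin d → ℝ) (hw : ∀ j, 0 < w j)
    (p pbar : Fin n → EuclideanSpace ℝ (Fin d))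
    (hp : ∀ i j, p i j = if i ∈ T j then -(n : ℝ) * w j else w j)
    (hpbar : ∀ i j, pbar i j = if i ∈ F j then -(n : ℝ) * w j else w j)
    (h : Fin (d + 1) → EuclideanSpace ℝ (Fin d))
    (hh : ∀ j k : Fin d, h (Fin.castSucc j) k =
      if k = j then ((d : ℝ) + 1) * (((n : ℝ) + 2) - (d : ℝ) / ((d : ℝ) + 1)) * w j
      else w k)
    (hlast : ∀ k : Fin d, h (Fin.last d) k = w k)
    (A : Fin n → Bool)
    (l : Fin n → EuclideanSpace ℝ (Fin d))
    (hl : ∀ i, l i = if A i then p i else pbar i) :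
    ∃ x ∈ convexHull ℝ (Set.range l ∪ Set.range h),
      ∀ j : Fin d,
        (((∃ i ∈ T j, A i = true) ∨ (∃ i ∈ F j, A i = false)) → x j = 0) ∧
        (¬ ((∃ i ∈ T j, A i = true) ∨ (∃ i ∈ F j, A i = false)) → x j = w j) := by
  classical
  have hN : (0:ℝ) < (n:ℝ)+1 := by positivity
  have hDd : (0:ℝ) < (d:ℝ)+1 := by positivity
  -- set of "killing" variables for clause j
  set D : Fin d → Finset (Fin n) := fun j =>
    Finset.univ.filter (fun i => (A i = true ∧ i ∈ T j) ∨ (A i = false ∧ i ∈ F j)) with hDdef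
  have hlD : ∀ i j, l i j = if i ∈ D j then -(n : ℝ) * w j else w j := by
    intro i j
    rw [hl]
    cases hA : A i with
    | false => simp [hpbar, hDdef, hA]
    | true => simp [hp, hDdef, hA]
  have hsle : ∀ j, (D j).card ≤ 2 := by
    intro j
    calc (D j).card ≤ (T j ∪ F j).card := Finset.card_le_card (by
          intro i hi
          simp only [hDdef, Finset.mem_filter, Finset.mem_univ, true_and] at hi
          rcases hi with ⟨_, h2⟩ | ⟨_, h2⟩ <;> simp [h2])
      _ ≤ (T j).card + (F j).card := Finset.card_union_le _ _
      _ ≤ 2 := hTF j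
  have hsat : ∀ j, ((∃ i ∈ T j, A i = true) ∨ (∃ i ∈ F j, A i = false)) ↔ (D j).Nonempty := by
    intro j
    constructor
    · rintro (⟨i, hi, hAi⟩ | ⟨i, hi, hAi⟩) <;>
        exact ⟨i, by simp [hDdef, hi, hAi]⟩
    · rintro ⟨i, hi⟩
      simp only [hDdef, Finset.mem_filter, Finset.mem_univ, true_and] at hi
      rcases hi with ⟨h1, h2⟩ | ⟨h1, h2⟩
      · exact Or.inl ⟨i, h2, h1⟩
      · exact Or.inr ⟨i, h2, h1⟩
  -- weights
  set c : Fin d → ℝ := fun j => if (D j).card = 2 then 1/(((d:ℝ)+1)*((n:ℝ)+1)) else 0 with hcdef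
  have hc_nonneg : ∀ j, 0 ≤ c j := by
    intro j; rw [hcdef]; dsimp only; split
    · positivity
    · exact le_refl 0
  have hc_le : ∀ j, c j ≤ 1/(((d:ℝ)+1)*((n:ℝ)+1)) := by
    intro j; rw [hcdef]; dsimp only; split
    · exact le_refl _
    · positivity
  set mu : ℝ := 1/((n:ℝ)+1) - ∑ k, c k with hmudef
  have hCsum_le : ∑ k, c k ≤ (d:ℝ)/(((d:ℝ)+1)*((n:ℝ)+1)) := by
    calc ∑ k, c k ≤ ∑ _k : Fin d, 1/(((d:ℝ)+1)*((n:ℝ)+1)) :=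
          Finset.sum_le_sum (fun k _ => hc_le k)
      _ = (d:ℝ) * (1/(((d:ℝ)+1)*((n:ℝ)+1))) := by
          rw [Finset.sum_const, Finset.card_univ, Fintype.card_fin, nsmul_eq_mul]
      _ = (d:ℝ)/(((d:ℝ)+1)*((n:ℝ)+1)) := by ring
  have hmu_nonneg : 0 ≤ mu := by
    rw [hmudef]
    have h1 : (d:ℝ)/(((d:ℝ)+1)*((n:ℝ)+1)) ≤ 1/((n:ℝ)+1) := by
      rw [div_le_div_iff₀ (by positivity) (by positivity)]
      nlinarith [hN, hDd]
    linarith [hCsum_le]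
  -- the convex combination
  set W : Fin n ⊕ Fin (d+1) → ℝ :=
    Sum.elim (fun _ => 1/((n:ℝ)+1)) (Fin.lastCases mu c) with hWdef
  set z : Fin n ⊕ Fin (d+1) → EuclideanSpace ℝ (Fin d) := Sum.elim l h with hzdef
  have hWsum : ∑ i, W i = 1 := by
    rw [hWdef, Fintype.sum_sum_type]
    simp only [Sum.elim_inl, Sum.elim_inr]
    rw [Fin.sum_univ_castSucc]
    simp only [Fin.lastCases_castSucc, Fin.lastCases_last]
    rw [Finset.sum_const, Finset.card_univ, Fintype.card_fin, nsmul_eq_mul, hmudef]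
    field_simp
    ring
  have hWnonneg : ∀ i, 0 ≤ W i := by
    intro i
    rw [hWdef]
    cases i with
    | inl i => simp only [Sum.elim_inl]; positivity
    | inr k =>
      simp only [Sum.elim_inr]
      induction k using Fin.lastCases with
      | last => rw [Fin.lastCases_last]; exact hmu_nonneg
      | cast k => rw [Fin.lastCases_castSucc]; exact hc_nonneg k
  refine ⟨∑ i, W i • z i, ?_, ?_⟩
  · refine (convex_convexHull ℝ _).sum_mem (fun i _ => hWnonneg i) hWsum (fun i _ => ?_)
    apply subset_convexHull
    rw [hzdef]
    cases i with
    | inl i => exact Or.inl ⟨i, rfl⟩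
    | inr k => exact Or.inr ⟨k, rfl⟩
  · intro j
    -- compute the j-th coordinate
    have hx : (∑ i, W i • z i) j = ∑ i, W i * z i j := by
      have h1 := map_sum (EuclideanSpace.proj j : EuclideanSpace ℝ (Fin d) →L[ℝ] ℝ)
        (fun i => W i • z i) Finset.univ
      have h2 : ∀ i, EuclideanSpace.proj j (W i • z i) = W i * z i j := by
        intro i; rw [map_smul]; rfl
      rw [show ((∑ i, W i • z i) j) = EuclideanSpace.proj j (∑ i, W i • z i) from rfl, h1]
      simp only [h2]
    -- the l-part of the sum
    have hpart1 : ∑ i : Fin n, W (Sum.inl i) * z (Sum.inl i) j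
        = (1/((n:ℝ)+1)) * (((D j).card : ℝ) * (-(n:ℝ) * w j)
            + ((n:ℝ) - ((D j).card : ℝ)) * w j) := by
      simp only [hWdef, hzdef, Sum.elim_inl]
      rw [← Finset.mul_sum]
      congr 1
      rw [← Finset.sum_add_sum_compl (D j) (fun i => l i j)]
      have e1 : ∑ i ∈ D j, l i j = ((D j).card : ℝ) * (-(n:ℝ) * w j) := by
        rw [Finset.sum_congr rfl (fun i hi => by rw [hlD i j, if_pos hi]),
          Finset.sum_const, nsmul_eq_mul]
      have hcle : (D j).card ≤ n := by
        simpa using Finset.card_le_univ (D j)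
      have e2 : ∑ i ∈ (D j)ᶜ, l i j = ((n:ℝ) - ((D j).card : ℝ)) * w j := by
        rw [Finset.sum_congr rfl (fun i hi => by
          rw [hlD i j, if_neg (Finset.mem_compl.mp hi)]), Finset.sum_const, nsmul_eq_mul,
          Finset.card_compl, Fintype.card_fin, Nat.cast_sub hcle]
      rw [e1, e2]
    -- the h-part of the sum
    have hpart2 : ∑ k : Fin (d+1), W (Sum.inr k) * z (Sum.inr k) j
        = (∑ k, c k) * w j + c j * ((((d:ℝ)+1)*((n:ℝ)+1)) * w j) + mu * w j := by
      simp only [hWdef, hzdef, Sum.elim_inr]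
      rw [Fin.sum_univ_castSucc]
      simp only [Fin.lastCases_castSucc, Fin.lastCases_last, hlast]
      congr 1
      have e3 : ∀ k : Fin d, c k * h (Fin.castSucc k) j
          = c k * w j + (if j = k then c k * ((((d:ℝ)+1)*((n:ℝ)+1)) * w j) else 0) := by
        intro k
        rw [hh]
        split_ifs with hjk
        · subst hjk
          have : ((d:ℝ)+1) * (((n:ℝ)+2) - (d:ℝ)/((d:ℝ)+1)) * w j
              = w j + (((d:ℝ)+1)*((n:ℝ)+1)) * w j := by
            field_simp
            ring
          rw [this]; ring
        · ring
      rw [Finset.sum_congr rfl (fun k _ => e3 k), Finset.sum_add_distrib,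
        Finset.sum_ite_eq, if_pos (Finset.mem_univ j), ← Finset.sum_mul]
    rw [hx, Fintype.sum_sum_type, hpart1, hpart2, hmudef]
    -- now a pure scalar identity depending on (D j).card ∈ {0,1,2}
    constructor
    · intro hsatj
      have hne : (D j).Nonempty := (hsat j).mp hsatj
      have hcard1 : 1 ≤ (D j).card := Finset.card_pos.mpr hne
      have hub := hsle j
      interval_cases hcd : (D j).card
      · rw [hcdef]; dsimp only; rw [hcd, if_neg (by norm_num)]
        push_cast
        field_simp
        ring
      · rw [hcdef]; dsimp only; rw [hcd, if_pos rfl]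
        push_cast
        field_simp
        ring
    · intro hnsat
      have hcard0 : (D j).card = 0 := by
        by_contra hc0
        exact hnsat ((hsat j).mpr (Finset.card_pos.mp (Nat.pos_of_ne_zero hc0)))
      rw [hcdef]; dsimp only; rw [hcard0, if_neg (by norm_num)]
      push_cast [hcard0]
      field_simp
      ring
end
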